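/- arXiv:0806.0984 — 13 statements merged into one kernel-verified Lean document; each statement's English description precedes it below -/
import Mathlib

section
/- If A is a set of nonnegative integers such that the sumset hA contains every integer n ≥ n₀, then for all real x ≥ 1, x - n₀ < binomial(A(0,x)+h-1, h), where A(0,x) denotes the number of elements of A in [0,x]. -/
/-- If every integer `n ≥ n₀` is a sum of `h` elements of `A`, then for all real
`x ≥ 1`, `x - n₀ < C(A(0,x)+h-1, h)`, where `A(0,x)` counts elements of `A` in `[0,x]`. -/
theorem stmt0 (A : Set ℕ) (h n₀ : ℕ)
    (hbasis : ∀ n : ℕ, n₀ ≤ n → ∃ c : Fin h → ℕ, (∀ i, c i ∈ A) ∧ ∑ i, c i = n) :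
    ∀ x : ℝ, 1 ≤ x →
      x - n₀ < (Nat.choose ((A ∩ {a : ℕ | (a : ℝ) ≤ x}).ncard + h - 1) h : ℝ) := by
  classical
  intro x hx
  have hx0 : (0 : ℝ) ≤ x := le_trans zero_le_one hx
  -- dispose of h = 0
  rcases Nat.eq_zero_or_pos h with hh | hh
  · subst hh
    obtain ⟨c, _, hc⟩ := hbasis (n₀ + 1) (Nat.le_succ _)
    simp at hc
  -- case x < n₀
  rcases lt_or_ge x (n₀ : ℝ) with hxn | hxn
  · have : x - n₀ < 0 := by linarith
    exact lt_of_lt_of_le this (Nat.cast_nonneg _)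
  -- main case
  set m := ⌊x⌋₊ with hm
  have hnm : n₀ ≤ m := Nat.le_floor hxn
  set T : Finset ℕ := (Finset.range (m + 1)).filter (· ∈ A) with hT
  have hTset : A ∩ {a : ℕ | (a : ℝ) ≤ x} = ↑T := by
    ext a
    simp only [hT, Finset.coe_filter, Finset.mem_range, Set.mem_setOf_eq,
      Set.mem_inter_iff, Finset.mem_coe]
    constructor
    · rintro ⟨ha, hax⟩
      exact ⟨Nat.lt_succ_of_le (Nat.le_floor hax), ha⟩
    · rintro ⟨ham, ha⟩
      refine ⟨ha, ?_⟩
      have : a ≤ m := Nat.lt_succ_iff.mp ham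
      calc (a : ℝ) ≤ m := Nat.cast_le.mpr this
        _ ≤ x := Nat.floor_le hx0
  have hcard : (A ∩ {a : ℕ | (a : ℝ) ≤ x}).ncard = T.card := by
    rw [hTset, Set.ncard_coe_finset]
  -- injection from Icc n₀ m to Sym ↥T h
  have key : ∀ n : (Finset.Icc n₀ m), ∃ s : Sym {a // a ∈ T} h,
      (s.val.map Subtype.val).sum = (n : ℕ) := by
    rintro ⟨n, hn⟩
    rw [Finset.mem_Icc] at hn
    obtain ⟨c, hcA, hcs⟩ := hbasis n hn.1
    have hci : ∀ i, c i ∈ T := by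
      intro i
      simp only [hT, Finset.mem_filter, Finset.mem_range]
      refine ⟨?_, hcA i⟩
      have : c i ≤ n := hcs ▸ Finset.single_le_sum (f := c)
        (fun j _ => Nat.zero_le _) (Finset.mem_univ i)
      omega
    refine ⟨⟨(List.ofFn (fun i => (⟨c i, hci i⟩ : {a // a ∈ T})) : Multiset _), by
      simp⟩, ?_⟩
    simp only [Multiset.map_coe, List.map_ofFn, Multiset.sum_coe]
    show (List.ofFn (fun i => c i)).sum = n
    rw [List.sum_ofFn]
    exact hcs
  let f : (Finset.Icc n₀ m) → Sym {a // a ∈ T} h := fun n => (key n).choose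
  have hfinj : Function.Injective f := by
    intro a b hab
    have ha := (key a).choose_spec
    have hb := (key b).choose_spec
    have : (a : ℕ) = (b : ℕ) := by
      rw [← ha, ← hb]
      show ((f a).val.map Subtype.val).sum = ((f b).val.map Subtype.val).sum
      rw [hab]
    exact Subtype.ext this
  have hle : (Finset.Icc n₀ m).card ≤ Fintype.card (Sym {a // a ∈ T} h) := by
    calc (Finset.Icc n₀ m).card = Fintype.card (Finset.Icc n₀ m) :=
        (Fintype.card_coe _).symm
      _ ≤ _ := Fintype.card_le_of_injective f hfinj
  have hsym : Fintype.card (Sym {a // a ∈ T} h) = (T.card + h - 1).choose h := by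
    rw [Sym.card_sym_eq_multichoose, Nat.multichoose_eq, Fintype.card_coe]
  rw [Nat.card_Icc] at hle
  rw [hsym] at hle
  rw [hcard]
  have h1 : x - n₀ < ((m + 1 - n₀ : ℕ) : ℝ) := by
    have : ((m + 1 - n₀ : ℕ) : ℝ) = (m : ℝ) + 1 - n₀ := by
      push_cast [Nat.le_succ_of_le hnm]
      ring
    rw [this]
    have : x < m + 1 := Nat.lt_floor_add_one x
    linarith
  calc x - n₀ < ((m + 1 - n₀ : ℕ) : ℝ) := h1
    _ ≤ _ := Nat.cast_le.mpr hle
end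

section
/- If A = {a_n} is a strictly increasing sequence of nonnegative integers forming an asymptotic basis of order h, then limsup_{n→∞} a_n/n^h ≤ 1/h!. -/
/-!
Every integer in `[n₀, a n]` is a sum of `h` terms taken from `a 0, …, a n`, because larger terms
would overshoot. Such a sum only depends on the multiset of indices, of which there are
`(n + h).choose h`, so `a n ≤ (n + h).choose h + n₀ ≤ (n + h) ^ h / h! + n₀`; dividing by `n ^ h`
and letting `n → ∞` gives the bound.
-/

open Filter Finset

theorem card_le_choose_of_forall_mem_eq_sum {ι M : Type*} [Fintype ι] [AddCommMonoid M]
    (f : ι → M) (h : ℕ) (t : Finset M) (ht : ∀ m ∈ t, ∃ c : Fin h → ι, ∑ j, f (c j) = m) :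
    #t ≤ (Fintype.card ι + h - 1).choose h := by
  classical
  let g : Sym ι h → M := fun s => (s.1.map f).sum
  have hg : Set.SurjOn g (univ : Finset (Sym ι h)) t := by
    intro m hm
    obtain ⟨c, rfl⟩ := ht m hm
    exact ⟨⟨List.ofFn c, by simp⟩, mem_coe.2 (mem_univ _), by simp [g, List.sum_ofFn]⟩
  calc #t ≤ #(univ : Finset (Sym ι h)) := card_le_card_of_surjOn g hg
    _ = _ := by rw [card_univ, Sym.card_sym_eq_choose]

theorem le_choose_add_of_forall_ge_eq_sum {a : ℕ → ℕ} (ha : StrictMono a) {h n₀ : ℕ}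
    (hb : ∀ n, n₀ ≤ n → ∃ c : Fin h → ℕ, (∀ i, c i ∈ Set.range a) ∧ ∑ i, c i = n) (n : ℕ) :
    a n ≤ (n + h).choose h + n₀ := by
  have hrep : ∀ m ∈ Icc n₀ (a n), ∃ c : Fin h → Fin (n + 1), ∑ j, a (c j) = m := by
    intro m hm
    rw [mem_Icc] at hm
    obtain ⟨c, hc, rfl⟩ := hb m hm.1
    have hidx : ∀ j, ∃ i : Fin (n + 1), a i = c j := by
      intro j
      obtain ⟨i, hi⟩ := hc j
      have hle : a i ≤ a n := hi ▸ (single_le_sum (fun _ _ => Nat.zero_le _) (mem_univ j)).trans hm.2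
      exact ⟨⟨i, Nat.lt_succ_of_le (ha.le_iff_le.1 hle)⟩, hi⟩
    choose v hv using hidx
    exact ⟨v, sum_congr rfl fun j _ => hv j⟩
  have hcard := card_le_choose_of_forall_mem_eq_sum (fun i : Fin (n + 1) => a i) h _ hrep
  rw [Nat.card_Icc, Fintype.card_fin, add_right_comm, Nat.add_sub_cancel] at hcard
  omega

theorem div_pow_le_of_le_choose_add {x e : ℝ} {n : ℕ} (hn : 0 < n) (h : ℕ)
    (hx : x ≤ (n + h).choose h + e) :
    x / n ^ h ≤ (1 + h / n) ^ h / h.factorial + e / n ^ h := by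
  have hchoose := Nat.choose_le_pow_div (α := ℝ) h (n + h)
  push_cast at hchoose
  calc x / n ^ h ≤ ((n + h) ^ h / h.factorial + e) / n ^ h := by gcongr; linarith
    _ = (1 + h / n) ^ h / h.factorial + e / n ^ h := by
      field_simp
      rw [div_pow, mul_div_cancel₀ _ (by positivity)]

theorem tendsto_one_add_div_pow_div_add_div_pow {h : ℕ} (hh : h ≠ 0) (c d e : ℝ) :
    Tendsto (fun n : ℕ => (1 + c / n) ^ h / d + e / (n : ℝ) ^ h) atTop (nhds (1 / d)) := by
  have hc : Tendsto (fun n : ℕ => 1 + c / n) atTop (nhds 1) := by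
    simpa using (tendsto_const_div_atTop_nhds_zero_nat c).const_add 1
  have he : Tendsto (fun n : ℕ => e / (n : ℝ) ^ h) atTop (nhds 0) :=
    tendsto_const_nhds.div_atTop ((tendsto_pow_atTop hh).comp tendsto_natCast_atTop_atTop)
  simpa using ((hc.pow h).div_const d).add he

/-- If `A = {a_n}` is a strictly increasing sequence of nonnegative integers forming an
asymptotic basis of order `h`, then `limsup a_n / n^h ≤ 1/h!`. -/
theorem stmt2 (h : ℕ) (a : ℕ → ℕ) (ha : StrictMono a)
    (hbasis : ∃ n₀ : ℕ, ∀ n : ℕ, n₀ ≤ n →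
      ∃ c : Fin h → ℕ, (∀ i, c i ∈ Set.range a) ∧ ∑ i, c i = n) :
    Filter.limsup (fun n : ℕ => (a n : ℝ) / (n : ℝ) ^ h) Filter.atTop
      ≤ 1 / Nat.factorial h := by
  obtain ⟨n₀, hb⟩ := hbasis
  have hh : h ≠ 0 := by
    rintro rfl
    obtain ⟨c, -, hc⟩ := hb (n₀ + 1) (by omega)
    simp at hc
  set b := fun n : ℕ => (1 + h / n) ^ h / h.factorial + n₀ / (n : ℝ) ^ h
  have hb_tendsto : Tendsto b atTop (nhds (1 / h.factorial)) :=
    tendsto_one_add_div_pow_div_add_div_pow hh _ _ _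
  have hle : ∀ᶠ n in atTop, (a n : ℝ) / (n : ℝ) ^ h ≤ b n := by
    filter_upwards [eventually_gt_atTop 0] with n hn
    exact div_pow_le_of_le_choose_add hn h
      (by exact_mod_cast le_choose_add_of_forall_ge_eq_sum ha hb n)
  have hcobdd : IsCoboundedUnder (· ≤ ·) atTop (fun n : ℕ => (a n : ℝ) / (n : ℝ) ^ h) :=
    isCoboundedUnder_le_of_le atTop fun n => by positivity
  calc limsup (fun n : ℕ => (a n : ℝ) / (n : ℝ) ^ h) atTop
      ≤ limsup b atTop := limsup_le_limsup hle hcobdd hb_tendsto.isBoundedUnder_le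
    _ = 1 / h.factorial := hb_tendsto.limsup_eq
end

section
/- There exists a sequence A = {a_n} of positive integers asymptotic to a growth function f, and a permutation σ of the positive integers, such that the rearranged sequence {a_{σ(n)}} is not asymptotic to any growth function. (For example, a_n = n with σ swapping 2^{2k-1} and 2^{2k} for each k.) -/
def mysig (n : ℕ) : ℕ :=
  if 2 ^ Nat.log 2 n = n ∧ 1 ≤ Nat.log 2 n then
    (if Odd (Nat.log 2 n) then 2 * n else n / 2)
  else n

lemma mysig_pow_odd {e : ℕ} (he : 1 ≤ e) (ho : Odd e) : mysig (2 ^ e) = 2 ^ (e + 1) := by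
  unfold mysig
  rw [Nat.log_pow one_lt_two]
  simp [he, ho, pow_succ, mul_comm]

lemma mysig_pow_even {e : ℕ} (he : 1 ≤ e) (ho : ¬ Odd e) : mysig (2 ^ e) = 2 ^ (e - 1) := by
  unfold mysig
  rw [Nat.log_pow one_lt_two, if_pos ⟨rfl, he⟩, if_neg ho]
  have h2 : e = (e - 1) + 1 := by omega
  conv_lhs => rw [h2]
  rw [pow_succ]
  exact Nat.mul_div_cancel _ two_pos

lemma mysig_invol : Function.Involutive mysig := by
  intro n
  by_cases h : 2 ^ Nat.log 2 n = n ∧ 1 ≤ Nat.log 2 n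
  · obtain ⟨hn, he⟩ := h
    set e := Nat.log 2 n with hE
    by_cases ho : Odd e
    · have h1 : mysig n = 2 ^ (e + 1) := by rw [← hn]; exact mysig_pow_odd he ho
      rw [h1, mysig_pow_even (by omega) (by simp [Nat.odd_add_one, ho])]
      simpa using hn
    · have h1 : mysig n = 2 ^ (e - 1) := by rw [← hn]; exact mysig_pow_even he ho
      obtain ⟨m, hm⟩ : Even e := Nat.not_odd_iff_even.mp ho
      have h2 : 2 ≤ e := by omega
      have ho' : Odd (e - 1) := ⟨m - 1, by omega⟩
      rw [h1, mysig_pow_odd (by omega) ho']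
      have h3 : e - 1 + 1 = e := by omega
      rw [h3, hn]
  · have h1 : mysig n = n := by unfold mysig; rw [if_neg h]
    rw [h1, h1]

lemma mysig_N (k : ℕ) : mysig (2 ^ (2 * k + 1)) = 2 ^ (2 * k + 2) := by
  rw [mysig_pow_odd (by omega) ⟨k, by omega⟩]

lemma mysig_M (k : ℕ) : mysig (2 ^ (2 * k + 2)) = 2 ^ (2 * k + 1) := by
  rw [mysig_pow_even (by omega) (by simp [Nat.odd_iff])]
  norm_num

open Filter

lemma c_tendsto : Tendsto (fun k : ℕ => (((2:ℝ) ^ (2 * k + 1) + 1) / ((2:ℝ) ^ (2 * k + 2) + 1))) atTop (nhds (1/2)) := by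
  have ht : Tendsto (fun k : ℕ => (2:ℝ) ^ (2 * k + 1)) atTop atTop := by
    have := tendsto_pow_atTop_atTop_of_one_lt (by norm_num : (1:ℝ) < 2)
    exact this.comp (tendsto_atTop_atTop_of_monotone (fun a b h => by omega) (fun b => ⟨b, by omega⟩))
  have hinv : Tendsto (fun k : ℕ => ((2:ℝ) ^ (2 * k + 1))⁻¹) atTop (nhds 0) :=
    tendsto_inv_atTop_zero.comp ht
  have heq : ∀ k : ℕ, ((2:ℝ) ^ (2 * k + 1) + 1) / ((2:ℝ) ^ (2 * k + 2) + 1)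
      = (1 + ((2:ℝ) ^ (2 * k + 1))⁻¹) / (2 + ((2:ℝ) ^ (2 * k + 1))⁻¹) := by
    intro k
    have h1 : (0:ℝ) < (2:ℝ) ^ (2 * k + 1) := by positivity
    have h2 : (2:ℝ) ^ (2 * k + 2) = 2 * (2:ℝ) ^ (2 * k + 1) := by ring
    rw [h2]
    field_simp
  simp_rw [heq]
  have : Tendsto (fun k : ℕ => (1 + ((2:ℝ) ^ (2 * k + 1))⁻¹) / (2 + ((2:ℝ) ^ (2 * k + 1))⁻¹)) atTop (nhds ((1+0)/(2+0))) := by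
    apply Tendsto.div (tendsto_const_nhds.add hinv) (tendsto_const_nhds.add hinv)
    norm_num
  simpa using this

/-- A growth function: positive, strictly increasing, continuous and unbounded on `[1,∞)`. -/
def IsGrowthFun (f : ℝ → ℝ) : Prop :=
  (∀ x ≥ (1 : ℝ), 0 < f x) ∧ StrictMonoOn f (Set.Ici 1) ∧
    ContinuousOn f (Set.Ici 1) ∧ Filter.Tendsto f Filter.atTop Filter.atTop

/-- There is a sequence of positive integers asymptotic to a growth function and a
permutation of the indices whose rearrangement is asymptotic to no growth function. -/
theorem stmt4 : ∃ (a : ℕ → ℕ) (f : ℝ → ℝ) (σ : ℕ → ℕ),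
    (∀ n, 0 < a n) ∧ IsGrowthFun f ∧
    Filter.Tendsto (fun n : ℕ => (a n : ℝ) / f n) Filter.atTop (nhds 1) ∧
    Function.Bijective σ ∧
    ¬ ∃ g : ℝ → ℝ, IsGrowthFun g ∧
      Filter.Tendsto (fun n : ℕ => (a (σ n) : ℝ) / g n) Filter.atTop (nhds 1) := by
  refine ⟨fun n => n + 1, fun x => x + 1, mysig, fun n => Nat.succ_pos n, ?_, ?_, mysig_invol.bijective, ?_⟩
  · exact ⟨fun x hx => by dsimp; linarith, fun x hx y hy hxy => by simpa using hxy,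
      (continuous_id.add continuous_const).continuousOn,
      tendsto_atTop_add_const_right _ 1 tendsto_id⟩
  · have : (fun n : ℕ => ((n + 1 : ℕ) : ℝ) / ((n : ℝ) + 1)) = fun _ => (1 : ℝ) := by
      funext n
      have : (0:ℝ) < (n : ℝ) + 1 := by positivity
      push_cast
      field_simp
    rw [this]; exact tendsto_const_nhds
  · rintro ⟨g, ⟨gpos, gmono, -, -⟩, hg⟩
    set N : ℕ → ℕ := fun k => 2 ^ (2 * k + 1) with hNdef
    set M : ℕ → ℕ := fun k => 2 ^ (2 * k + 2) with hMdef
    have hN1 : ∀ k, (1:ℝ) ≤ (N k : ℝ) := fun k => by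
      exact_mod_cast Nat.one_le_two_pow
    have hM1 : ∀ k, (1:ℝ) ≤ (M k : ℝ) := fun k => by
      exact_mod_cast Nat.one_le_two_pow
    have hgN : ∀ k, 0 < g (N k) := fun k => gpos _ (hN1 k)
    have hgM : ∀ k, 0 < g (M k) := fun k => gpos _ (hM1 k)
    have hNM : ∀ k, (N k : ℝ) < (M k : ℝ) := fun k => by
      exact_mod_cast Nat.pow_lt_pow_right one_lt_two (by omega)
    have hNtop : Tendsto N atTop atTop := by
      apply StrictMono.tendsto_atTop
      apply strictMono_nat_of_lt_succ
      intro k; exact Nat.pow_lt_pow_right one_lt_two (by omega)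
    have hMtop : Tendsto M atTop atTop := by
      apply StrictMono.tendsto_atTop
      apply strictMono_nat_of_lt_succ
      intro k; exact Nat.pow_lt_pow_right one_lt_two (by omega)
    have hr : Tendsto (fun k => ((M k + 1 : ℕ) : ℝ) / g (N k)) atTop (nhds 1) := by
      have := hg.comp hNtop
      refine this.congr fun k => ?_
      simp only [Function.comp, hNdef, hMdef, mysig_N]
    have hs : Tendsto (fun k => ((N k + 1 : ℕ) : ℝ) / g (M k)) atTop (nhds 1) := by
      have := hg.comp hMtop
      refine this.congr fun k => ?_
      simp only [Function.comp, hNdef, hMdef, mysig_M]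
    have hc : Tendsto (fun k => ((N k + 1 : ℕ) : ℝ) / ((M k + 1 : ℕ) : ℝ)) atTop (nhds (1/2)) := by
      have := c_tendsto
      refine this.congr fun k => ?_
      simp only [hNdef, hMdef]
      push_cast
      ring_nf
    have hu : Tendsto (fun k => g (M k) / g (N k)) atTop (nhds ((1 / 1) * (1/2))) := by
      refine ((hr.div hs one_ne_zero).mul hc).congr fun k => ?_
      have h1 : ((M k + 1 : ℕ) : ℝ) ≠ 0 := by positivity
      have h2 : ((N k + 1 : ℕ) : ℝ) ≠ 0 := by positivity
      have key : ∀ (x y gm gn : ℝ), x ≠ 0 → y ≠ 0 → gm ≠ 0 → gn ≠ 0 →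
          (x / gn) / (y / gm) * (y / x) = gm / gn := by
        intros x y gm gn hx hy hgm hgn
        field_simp
      exact key _ _ _ _ h1 h2 (hgM k).ne' (hgN k).ne'
    rw [show (1:ℝ)/1 * (1/2) = 1/2 by norm_num] at hu
    have hev : ∀ᶠ k in atTop, g (M k) / g (N k) < 1 :=
      hu.eventually_lt_const (by norm_num)
    obtain ⟨k, hk⟩ := hev.exists
    have : 1 < g (M k) / g (N k) := by
      rw [one_lt_div (hgN k)]
      exact gmono (Set.mem_Ici.mpr (hN1 k)) (Set.mem_Ici.mpr (hM1 k)) (hNM k)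
    linarith
end

section
/- Let A = {a_n} be a sequence of positive integers, let f and g be asymptotically stable growth functions, and let σ be a permutation of the positive integers. If a_n ~ f(n) and a_{σ(n)} ~ g(n), then f(n) ~ g(n) as n → ∞. -/
/-!
A rearrangement cannot move large terms far down: among `σ 0, …, σ n` some value is at least
`n`. So if `f ∘ σ ≤ (1 + ε) g` eventually, then for large `n` we may pick `k ≤ n` with
`n ≤ σ k`, and monotonicity gives `f n ≤ f (σ k) ≤ (1 + ε) g k ≤ (1 + ε) g n`. Applying the
same argument to `σ⁻¹` with the roles of `f` and `g` exchanged gives the reverse bound. The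
input `f ∘ σ ~ g` holds because `f(σ n) ~ a_{σ(n)} ~ g(n)`.
-/

open Filter Asymptotics Set

theorem Function.Injective.exists_le_and_le_apply {σ : ℕ → ℕ} (hσ : σ.Injective) (n : ℕ) :
    ∃ k ≤ n, n ≤ σ k := by
  by_contra! hlt
  have hcard : (Finset.range (n + 1)).card ≤ (Finset.range n).card := by
    refine Finset.card_le_card_of_injOn σ (fun k hk => ?_) hσ.injOn
    simp only [Finset.coe_range, mem_Iio] at hk ⊢
    exact hlt k (Nat.lt_succ_iff.mp hk)
  simp only [Finset.card_range] at hcard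
  omega

theorem eventually_le_of_eventually_comp_le {α : Type*} [Preorder α] {u w : ℕ → α}
    {σ : ℕ → ℕ} {N : ℕ} (hσ : σ.Injective) (hu : MonotoneOn u (Ici N))
    (hw : MonotoneOn w (Ici N)) (h : ∀ᶠ k in atTop, u (σ k) ≤ w k) :
    ∀ᶠ n in atTop, u n ≤ w n := by
  obtain ⟨K, hK⟩ := eventually_atTop.mp (h.and (eventually_ge_atTop N))
  filter_upwards [eventually_gt_atTop ((Finset.range K).sup σ), eventually_ge_atTop N]
    with n hn hNn
  obtain ⟨k, hkn, hnk⟩ := hσ.exists_le_and_le_apply n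
  have hKk : K ≤ k := by
    by_contra! hkK
    have : σ k ≤ (Finset.range K).sup σ := Finset.le_sup (Finset.mem_range.mpr hkK)
    omega
  obtain ⟨hk, hNk⟩ := hK k hKk
  calc u n ≤ u (σ k) := hu hNn (hNn.trans hnk) hnk
    _ ≤ w k := hk
    _ ≤ w n := hw hNk hNn hkn

namespace Asymptotics

variable {α : Type*} {l : Filter α} {u v : α → ℝ}

theorem IsEquivalent.eventually_le_one_add_mul (h : u ~[l] v) (hv : ∀ᶠ x in l, 0 ≤ v x)
    {ε : ℝ} (hε : 0 < ε) : ∀ᶠ x in l, u x ≤ (1 + ε) * v x := by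
  filter_upwards [h.isLittleO.bound hε, hv] with x hx hvx
  rw [Real.norm_eq_abs, Real.norm_eq_abs, abs_of_nonneg hvx] at hx
  have := le_abs_self (u x - v x)
  simp only [Pi.sub_apply] at hx
  linarith

theorem isEquivalent_of_eventually_le_one_add_mul (hv : ∀ᶠ x in l, 0 < v x)
    (h : ∀ ε > 0, ∀ᶠ x in l, u x ≤ (1 + ε) * v x ∧ v x ≤ (1 + ε) * u x) : u ~[l] v := by
  refine isEquivalent_of_tendsto_one (Metric.tendsto_nhds.mpr fun ε hε => ?_)
  filter_upwards [h (ε / 2) (by positivity), hv] with x ⟨hupper, hlower⟩ hvx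
  rw [Pi.div_apply, Real.dist_eq, abs_sub_lt_iff]
  constructor
  · have : u x / v x ≤ 1 + ε / 2 := (div_le_iff₀ hvx).mpr hupper
    linarith
  · have : (1 - ε) * v x < u x := by nlinarith
    have : 1 - ε < u x / v x := (lt_div_iff₀ hvx).mpr this
    linarith

theorem IsEquivalent.of_comp_equiv {u v : ℕ → ℝ} (σ : ℕ ≃ ℕ) {N : ℕ}
    (hu : MonotoneOn u (Ici N)) (hv : MonotoneOn v (Ici N)) (hv0 : ∀ᶠ n in atTop, 0 < v n)
    (h : (u ∘ σ) ~[atTop] v) : u ~[atTop] v := by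
  have hmul {w : ℕ → ℝ} (hw : MonotoneOn w (Ici N)) {ε : ℝ} (hε : 0 < ε) :
      MonotoneOn (fun n => (1 + ε) * w n) (Ici N) :=
    fun _ hm _ hn hmn => mul_le_mul_of_nonneg_left (hw hm hn hmn) (by positivity)
  have hv0' : ∀ᶠ n in atTop, 0 ≤ v n := hv0.mono fun _ => le_of_lt
  refine isEquivalent_of_eventually_le_one_add_mul hv0 fun ε hε => ?_
  have hupper : ∀ᶠ k in atTop, u (σ k) ≤ (1 + ε) * v k :=
    h.eventually_le_one_add_mul hv0' hε
  have hlower : ∀ᶠ m in atTop, v (σ.symm m) ≤ (1 + ε) * u m := by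
    have := σ.symm.injective.nat_tendsto_atTop.eventually
      (h.symm.eventually_le_one_add_mul (h.eventually_nonneg hv0') hε)
    simpa only [Function.comp_apply, Equiv.apply_symm_apply] using this
  exact (eventually_le_of_eventually_comp_le σ.injective hu (hmul hv hε) hupper).and
    (eventually_le_of_eventually_comp_le σ.symm.injective hv (hmul hu hε) hlower)

end Asymptotics

theorem IsGrowthFun.monotoneOn_natCast {f : ℝ → ℝ} (hf : IsGrowthFun f) :
    MonotoneOn (fun n : ℕ => f n) (Ici 1) :=
  fun _ hm _ hn hmn => hf.2.1.monotoneOn (mem_Ici.mpr (Nat.one_le_cast.mpr hm))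
    (mem_Ici.mpr (Nat.one_le_cast.mpr hn)) (Nat.cast_le.mpr hmn)

theorem IsGrowthFun.eventually_pos_natCast {f : ℝ → ℝ} (hf : IsGrowthFun f) :
    ∀ᶠ n : ℕ in atTop, 0 < f n :=
  (hf.2.2.2.comp tendsto_natCast_atTop_atTop).eventually_gt_atTop 0

theorem stmt5_general (a : ℕ → ℕ) (f g : ℝ → ℝ) (σ : ℕ → ℕ)
    (hf : IsGrowthFun f)
    (hg : IsGrowthFun g)
    (hσ : Function.Bijective σ)
    (h1 : Filter.Tendsto (fun n : ℕ => (a n : ℝ) / f n) Filter.atTop (nhds 1))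
    (h2 : Filter.Tendsto (fun n : ℕ => (a (σ n) : ℝ) / g n) Filter.atTop (nhds 1)) :
    Filter.Tendsto (fun n : ℕ => f n / g n) Filter.atTop (nhds 1) := by
  have haf : (fun n : ℕ => (a n : ℝ)) ~[atTop] fun n => f n := isEquivalent_of_tendsto_one h1
  have hag : (fun n : ℕ => (a (σ n) : ℝ)) ~[atTop] fun n => g n :=
    isEquivalent_of_tendsto_one h2
  have hfg : ((fun n : ℕ => f n) ∘ σ) ~[atTop] fun n => g n :=
    (haf.comp_tendsto hσ.injective.nat_tendsto_atTop).symm.trans hag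
  have hg0 := hg.eventually_pos_natCast
  exact (isEquivalent_iff_tendsto_one (hg0.mono fun _ => ne_of_gt)).mp
    (hfg.of_comp_equiv (Equiv.ofBijective σ hσ) hf.monotoneOn_natCast hg.monotoneOn_natCast hg0)

/-- If a sequence of positive integers is asymptotic to an asymptotically stable growth
function `f`, and a rearrangement of it is asymptotic to an asymptotically stable growth
function `g`, then `f(n) ~ g(n)`. -/
theorem stmt5 (a : ℕ → ℕ) (hapos : ∀ n, 0 < a n) (f g : ℝ → ℝ) (σ : ℕ → ℕ)
    (hf : IsGrowthFun f)
    (hfs : ∀ Δ > (0 : ℝ),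
      Filter.Tendsto (fun x => f (x + Δ) / f x) Filter.atTop (nhds 1))
    (hg : IsGrowthFun g)
    (hgs : ∀ Δ > (0 : ℝ),
      Filter.Tendsto (fun x => g (x + Δ) / g x) Filter.atTop (nhds 1))
    (hσ : Function.Bijective σ)
    (h1 : Filter.Tendsto (fun n : ℕ => (a n : ℝ) / f n) Filter.atTop (nhds 1))
    (h2 : Filter.Tendsto (fun n : ℕ => (a (σ n) : ℝ) / g n) Filter.atTop (nhds 1)) :
    Filter.Tendsto (fun n : ℕ => f n / g n) Filter.atTop (nhds 1) :=
  stmt5_general a f g σ hf hg hσ h1 h2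
end

section
/- Let A = {a_n} be a sequence of real numbers and f a growth function with a_n ~ f(n). If σ is a permutation of the positive integers such that the sequence {a_{σ(n)}} is nondecreasing, then a_{σ(n)} ~ f(n). -/
/-- If `a_n ~ f(n)` for a growth function `f` and `σ` is a permutation making the
rearranged sequence nondecreasing, then `a_{σ(n)} ~ f(n)`. -/
theorem stmt6 (a : ℕ → ℝ) (f : ℝ → ℝ) (hf : IsGrowthFun f)
    (h1 : Filter.Tendsto (fun n : ℕ => a n / f n) Filter.atTop (nhds 1))
    (σ : ℕ → ℕ) (hσ : Function.Bijective σ)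
    (hmono : Monotone (fun n => a (σ n))) :
    Filter.Tendsto (fun n : ℕ => a (σ n) / f n) Filter.atTop (nhds 1) := by
  obtain ⟨hfpos, hfmono, _hc, _ht⟩ := hf
  have hfm : MonotoneOn f (Set.Ici 1) := hfmono.monotoneOn
  set e := Equiv.ofBijective σ hσ with he
  rw [Metric.tendsto_atTop] at h1 ⊢
  intro ε hε
  set δ := min ε (1/2) with hδdef
  have hδ : 0 < δ := lt_min hε (by norm_num)
  have hδ2 : δ ≤ 1/2 := min_le_right _ _
  have hδε : δ ≤ ε := min_le_left _ _
  obtain ⟨N0, hN0⟩ := h1 δ hδ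
  set N : ℕ := max N0 1 with hNdef
  -- bounds on a m for m ≥ N
  have hbound : ∀ m : ℕ, N ≤ m → (1 - δ) * f m < a m ∧ a m < (1 + δ) * f m := by
    intro m hm
    have hm1 : (1 : ℝ) ≤ (m : ℝ) := by
      exact_mod_cast le_trans (le_max_right N0 1) hm
    have hfmpos : 0 < f m := hfpos _ hm1
    have := hN0 m (le_trans (le_max_left N0 1) hm)
    rw [Real.dist_eq, abs_sub_lt_iff] at this
    constructor
    · have h2 : 1 - δ < a m / f m := by linarith [this.2]
      calc (1 - δ) * f m < (a m / f m) * f m := by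
            exact mul_lt_mul_of_pos_right h2 hfmpos
        _ = a m := by field_simp
    · have h2 : a m / f m < 1 + δ := by linarith [this.1]
      calc a m = (a m / f m) * f m := by field_simp
        _ < (1 + δ) * f m := mul_lt_mul_of_pos_right h2 hfmpos
  set K : ℕ := (Finset.range N).sup (fun j => e.symm j) + 1 with hKdef
  refine ⟨max N K, fun n hn => ?_⟩
  have hnN : N ≤ n := le_trans (le_max_left _ _) hn
  have hnK : K ≤ n := le_trans (le_max_right _ _) hn
  have hn1 : (1 : ℝ) ≤ (n : ℝ) := by
    exact_mod_cast le_trans (le_max_right N0 1) hnN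
  have hfn : 0 < f n := hfpos _ hn1
  -- lower bound: ∃ k ≤ n with σ k ≥ n
  obtain ⟨k₁, hk₁n, hk₁⟩ : ∃ k ≤ n, n ≤ σ k := by
    by_contra h
    push_neg at h
    have hsub : (Finset.range (n+1)).image σ ⊆ Finset.range n := by
      intro m hm
      simp only [Finset.mem_image, Finset.mem_range] at hm ⊢
      obtain ⟨k, hk, rfl⟩ := hm
      exact h k (Nat.lt_succ_iff.mp hk)
    have := Finset.card_le_card hsub
    rw [Finset.card_image_of_injective _ hσ.1, Finset.card_range, Finset.card_range] at this
    omega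
  -- upper bound: ∃ k ≥ n with N ≤ σ k ≤ n
  obtain ⟨k₂, hk₂n, hk₂lo, hk₂hi⟩ : ∃ k, n ≤ k ∧ N ≤ σ k ∧ σ k ≤ n := by
    set S := (Finset.range n).image σ with hS
    have hnotsub : ¬ (Finset.Ico N (n+1) ⊆ S) := by
      intro hsub
      have hrsub : Finset.range (n+1) ⊆ S := by
        intro m hm
        simp only [Finset.mem_range] at hm
        rcases lt_or_ge m N with hmN | hmN
        · have : e.symm m < n := by
            calc e.symm m ≤ (Finset.range N).sup (fun j => e.symm j) :=
                  Finset.le_sup (Finset.mem_range.mpr hmN)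
              _ < K := Nat.lt_succ_self _
              _ ≤ n := hnK
          have : σ (e.symm m) = m := e.apply_symm_apply m
          simp only [hS, Finset.mem_image]
          exact ⟨e.symm m, Finset.mem_range.mpr ‹e.symm m < n›, this⟩
        · exact hsub (Finset.mem_Ico.mpr ⟨hmN, hm⟩)
      have h1 := Finset.card_le_card hrsub
      have h2 : S.card ≤ n := le_trans (Finset.card_image_le) (le_of_eq (Finset.card_range n))
      rw [Finset.card_range] at h1
      omega
    obtain ⟨m, hm, hmS⟩ := Finset.not_subset.mp hnotsub
    rw [Finset.mem_Ico] at hm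
    refine ⟨e.symm m, ?_, ?_, ?_⟩
    · by_contra h
      push_neg at h
      exact hmS (by
        simp only [hS, Finset.mem_image]
        exact ⟨e.symm m, Finset.mem_range.mpr h, e.apply_symm_apply m⟩)
    · rw [show σ (e.symm m) = m from e.apply_symm_apply m]; exact hm.1
    · rw [show σ (e.symm m) = m from e.apply_symm_apply m]; exact Nat.lt_succ_iff.mp hm.2
  -- combine
  have hlow : (1 - δ) * f n < a (σ n) := by
    have h1le : (1 : ℝ) ≤ (σ k₁ : ℝ) := le_trans hn1 (by exact_mod_cast hk₁)
    have hfle : f n ≤ f (σ k₁) := hfm hn1 h1le (by exact_mod_cast hk₁)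
    have hb := (hbound (σ k₁) (le_trans hnN hk₁)).1
    have hmle : a (σ k₁) ≤ a (σ n) := hmono hk₁n
    have h1δ : 0 ≤ 1 - δ := by linarith
    nlinarith
  have hhigh : a (σ n) < (1 + δ) * f n := by
    have h1le : (1 : ℝ) ≤ (σ k₂ : ℝ) := by
      have : 1 ≤ σ k₂ := le_trans (le_max_right N0 1) hk₂lo
      exact_mod_cast this
    have hfle : f (σ k₂) ≤ f n := hfm h1le hn1 (by exact_mod_cast hk₂hi)
    have hb := (hbound (σ k₂) hk₂lo).2
    have hmle : a (σ n) ≤ a (σ k₂) := hmono hk₂n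
    nlinarith
  rw [Real.dist_eq, abs_sub_lt_iff]
  constructor
  · have : a (σ n) / f n < 1 + δ := (div_lt_iff₀ hfn).mpr (by linarith)
    linarith
  · have : 1 - δ < a (σ n) / f n := (lt_div_iff₀ hfn).mpr (by linarith)
    linarith
end

section
/- Let C be a set of nonnegative integers of asymptotic density 1, and let g be a growth function with lim_{x→∞} g(x)/x = ∞. Then there exists a sequence {c_n} of pairwise distinct elements of C with c_n ~ g(n). -/
open Filter Topology Asymptotics

-- `C(0, x)`
noncomputable def countUpTo (C : Set ℕ) (x : ℝ) : ℕ := (C ∩ {m : ℕ | (m : ℝ) ≤ x}).ncard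

def HasDensityOne (C : Set ℕ) : Prop :=
  Tendsto (fun x : ℝ => (countUpTo C x : ℝ) / x) atTop (𝓝 1)

lemma countUpTo_eq_count (C : Set ℕ) [DecidablePred (· ∈ C)] {x : ℝ} (hx : 0 ≤ x) :
    countUpTo C x = Nat.count (· ∈ C) (⌊x⌋₊ + 1) := by
  have : C ∩ {m : ℕ | (m : ℝ) ≤ x} = ↑({m ∈ Finset.range (⌊x⌋₊ + 1) | m ∈ C}) := by
    ext m
    simp [Nat.le_floor_iff hx, and_comm]
  rw [countUpTo, this, Set.ncard_coe_finset, Nat.count_eq_card_filter_range]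

lemma countUpTo_mono (C : Set ℕ) : Monotone (countUpTo C) := by
  intro x y hxy
  refine Set.ncard_le_ncard (fun m hm => ⟨hm.1, hm.2.trans hxy⟩) ?_
  exact (Set.finite_Iic ⌊y⌋₊).subset fun m hm => Nat.le_floor hm.2

lemma countUpTo_nth {C : Set ℕ} (hinf : C.Infinite) (k : ℕ) :
    countUpTo C (Nat.nth (· ∈ C) k) = k + 1 := by
  classical
  rw [countUpTo_eq_count C (Nat.cast_nonneg _), Nat.floor_natCast]
  exact Nat.count_nth_succ_of_infinite (p := (· ∈ C)) hinf k

lemma HasDensityOne.countUpTo_isEquivalent {C : Set ℕ} (hC : HasDensityOne C) :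
    (fun x => (countUpTo C x : ℝ)) ~[atTop] id :=
  isEquivalent_of_tendsto_one hC

lemma HasDensityOne.infinite {C : Set ℕ} (hC : HasDensityOne C) : C.Infinite := by
  intro hfin
  have htop := hC.countUpTo_isEquivalent.symm.tendsto_atTop tendsto_id
  obtain ⟨x, hx⟩ := (htop.eventually_gt_atTop (C.ncard : ℝ)).exists
  exact (Set.ncard_le_ncard Set.inter_subset_left hfin).not_gt (by exact_mod_cast hx)

lemma HasDensityOne.nth_isEquivalent {C : Set ℕ} (hC : HasDensityOne C) :
    (fun k => (Nat.nth (· ∈ C) k : ℝ)) ~[atTop] (fun k => (k : ℝ)) := by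
  have hnth : Tendsto (fun k => (Nat.nth (· ∈ C) k : ℝ)) atTop atTop :=
    tendsto_natCast_atTop_atTop.comp (Nat.nth_strictMono hC.infinite).tendsto_atTop
  have hsucc : (fun k : ℕ => (k : ℝ) + 1) ~[atTop] (fun k => (k : ℝ)) :=
    IsEquivalent.refl.add_isLittleO (isLittleO_const_id_atTop (1 : ℝ)).natCast_atTop
  have hcount := (hC.countUpTo_isEquivalent.comp_tendsto hnth).symm
  simp only [Function.comp_def, countUpTo_nth hC.infinite, id, Nat.cast_add, Nat.cast_one]
    at hcount
  exact hcount.trans hsucc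

lemma isLittleO_natCast_of_tendsto_div {x : ℕ → ℝ}
    (hx : Tendsto (fun n => x n / n) atTop atTop) : (fun n : ℕ => (n : ℝ)) =o[atTop] x := by
  have hpos : ∀ᶠ n in atTop, 0 < x n / n := hx.eventually_gt_atTop 0
  refine (isLittleO_iff_tendsto' ?_).2 ?_
  · filter_upwards [hpos] with n hn hxn
    simp [hxn] at hn
  · refine hx.inv_tendsto_atTop.congr fun n => ?_
    simp only [Pi.inv_apply, inv_div]

lemma tendsto_atTop_of_tendsto_div {x : ℕ → ℝ}
    (hx : Tendsto (fun n => x n / n) atTop atTop) : Tendsto x atTop atTop := by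
  refine (hx.atTop_mul_atTop₀ tendsto_natCast_atTop_atTop).congr' ?_
  filter_upwards [eventually_ne_atTop 0] with n hn
  field_simp

theorem HasDensityOne.exists_injective_isEquivalent {C : Set ℕ} (hC : HasDensityOne C)
    {x : ℕ → ℝ} (hmono : Monotone x) (hx : Tendsto (fun n => x n / n) atTop atTop) :
    ∃ c : ℕ → ℕ, Function.Injective c ∧ (∀ n, c n ∈ C) ∧ (fun n => (c n : ℝ)) ~[atTop] x := by
  set idx : ℕ → ℕ := fun n => countUpTo C (x n) + n
  have hidx : StrictMono idx := ((countUpTo_mono C).comp hmono).add_strictMono strictMono_id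
  have hnx : (fun n : ℕ => (n : ℝ)) =o[atTop] x := isLittleO_natCast_of_tendsto_div hx
  have hidx_equiv : (fun n => (idx n : ℝ)) ~[atTop] x := by
    have hcount := hC.countUpTo_isEquivalent.comp_tendsto (tendsto_atTop_of_tendsto_div hx)
    exact (hcount.add_isLittleO hnx).congr_left (.of_forall fun n => by simp [idx])
  refine ⟨fun n => Nat.nth (· ∈ C) (idx n), ((Nat.nth_strictMono hC.infinite).comp hidx).injective,
    fun n => Nat.nth_mem_of_infinite hC.infinite _, ?_⟩
  exact (hC.nth_isEquivalent.comp_tendsto hidx.tendsto_atTop).trans hidx_equiv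

/-- If `C` has asymptotic density `1` and `g` is a growth function with `g(x)/x → ∞`,
then `C` contains a sequence of pairwise distinct elements with `c_n ~ g(n)`. -/
theorem stmt8 (C : Set ℕ)
    (hC : Filter.Tendsto
      (fun x : ℝ => ((C ∩ {m : ℕ | (m : ℝ) ≤ x}).ncard : ℝ) / x)
      Filter.atTop (nhds 1))
    (g : ℝ → ℝ) (hg : IsGrowthFun g)
    (hgx : Filter.Tendsto (fun x => g x / x) Filter.atTop Filter.atTop) :
    ∃ c : ℕ → ℕ, Function.Injective c ∧ (∀ n, c n ∈ C) ∧
      Filter.Tendsto (fun n : ℕ => (c n : ℝ) / g n) Filter.atTop (nhds 1) := by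
  obtain ⟨hpos, hsmono, -, -⟩ := hg
  -- `g` is only controlled on `[1, ∞)`
  set x : ℕ → ℝ := fun n => g (max n 1)
  have hxg : x =ᶠ[atTop] fun n => g n := by
    filter_upwards [eventually_ge_atTop 1] with n hn
    simp [x, max_eq_left (show (1 : ℝ) ≤ n by exact_mod_cast hn)]
  have hmono : Monotone x := fun m n hmn =>
    hsmono.monotoneOn (Set.mem_Ici.2 (le_max_right _ _)) (Set.mem_Ici.2 (le_max_right _ _))
      (max_le_max_right 1 (by exact_mod_cast hmn))
  have hx : Tendsto (fun n => x n / n) atTop atTop :=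
    (hgx.comp tendsto_natCast_atTop_atTop).congr' (hxg.symm.div .rfl)
  obtain ⟨c, hinj, hmem, hc⟩ := HasDensityOne.exists_injective_isEquivalent hC hmono hx
  refine ⟨c, hinj, hmem, (isEquivalent_iff_tendsto_one ?_).1 (hc.congr_right hxg)⟩
  filter_upwards [eventually_ge_atTop 1] with n hn
  exact (hpos n (by exact_mod_cast hn)).ne'
end

section
/- Let f be a growth function, A = {a_k} a strictly increasing sequence of positive integers with a_k ~ f(k), and g an asymptotically stable growth function with g(x)/x → ∞. If g(x) ≤ f(x) and g⁻¹(f(x+1)) - g⁻¹(f(x)) ≥ 1 for all x ≥ 1, then there exists a strictly increasing sequence of positive integers B = {b_n} with b_n ~ g(n) such that A is a subsequence of B. -/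
namespace Stmt10Aux

/-- capped index sequence -/
def idxf (N a : ℕ → ℕ) : ℕ → ℕ
  | 0 => min (N 0) (a 0 - 1)
  | k+1 => min (N (k+1)) (idxf N a k + (a (k+1) - a k))

variable {N a : ℕ → ℕ}

lemma idxf_zero_def : idxf N a 0 = min (N 0) (a 0 - 1) := rfl

lemma idxf_succ_def (k : ℕ) :
    idxf N a (k+1) = min (N (k+1)) (idxf N a k + (a (k+1) - a k)) := rfl

lemma idxf_le_N : ∀ k, idxf N a k ≤ N k
  | 0 => min_le_left _ _
  | (_+1) => min_le_left _ _

lemma idxf_lt_a (ha : StrictMono a) (ha0 : 1 ≤ a 0) : ∀ k, idxf N a k < a k := by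
  intro k
  induction k with
  | zero =>
      have := min_le_right (N 0) (a 0 - 1)
      rw [idxf_zero_def]; omega
  | succ k ih =>
      have h2 : a k < a (k+1) := ha (by omega)
      rw [idxf_succ_def]
      rcases Nat.le_total (N (k+1)) (idxf N a k + (a (k+1) - a k)) with h | h
      · rw [min_eq_left h]
        have := idxf_le_N (N := N) (a := a) k
        omega
      · rw [min_eq_right h]; omega

lemma idxf_succ_ge (ha : StrictMono a) (hN : ∀ k, N k + 1 ≤ N (k+1)) (k : ℕ) :
    idxf N a k + 1 ≤ idxf N a (k+1) := by
  have h1 := idxf_le_N (N := N) (a := a) k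
  have h2 := hN k
  have h3 : a k < a (k+1) := ha (by omega)
  rw [idxf_succ_def]
  rcases Nat.le_total (N (k+1)) (idxf N a k + (a (k+1) - a k)) with h | h
  · rw [min_eq_left h]; omega
  · rw [min_eq_right h]; omega

lemma idxf_strictMono (ha : StrictMono a) (hN : ∀ k, N k + 1 ≤ N (k+1)) :
    StrictMono (idxf N a) :=
  strictMono_nat_of_lt_succ (fun k => by have := idxf_succ_ge ha hN k; omega)

lemma idxf_succ_le (ha : Monotone a) (k : ℕ) :
    idxf N a (k+1) + a k ≤ idxf N a k + a (k+1) := by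
  have hm : a k ≤ a (k+1) := ha (by omega)
  rw [idxf_succ_def]
  rcases Nat.le_total (N (k+1)) (idxf N a k + (a (k+1) - a k)) with h | h
  · rw [min_eq_left h]; omega
  · rw [min_eq_right h]; omega

lemma idxf_decomp (ha : Monotone a) : ∀ k, ∃ j ≤ k, (j = 0 ∨ idxf N a j = N j) ∧
    idxf N a k + a j = idxf N a j + a k := by
  intro k
  induction k with
  | zero => exact ⟨0, le_refl _, Or.inl rfl, rfl⟩
  | succ k ih =>
      by_cases h : idxf N a (k+1) = N (k+1)
      · exact ⟨k+1, le_refl _, Or.inr h, rfl⟩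
      · obtain ⟨j, hj, hjor, hje⟩ := ih
        refine ⟨j, Nat.le_succ_of_le hj, hjor, ?_⟩
        have hmin : idxf N a (k+1) = idxf N a k + (a (k+1) - a k) := by
          rw [idxf_succ_def] at h ⊢
          rcases Nat.le_total (N (k+1)) (idxf N a k + (a (k+1) - a k)) with h' | h'
          · exact absurd (min_eq_left h') h
          · exact min_eq_right h'
        have hak : a k ≤ a (k+1) := ha (by omega)
        have haj := ha hj
        omega

/-- block index of n -/
def Kof (idx : ℕ → ℕ) (n : ℕ) : ℕ := Nat.findGreatest (fun k => idx k ≤ n) n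

variable {idx : ℕ → ℕ}

lemma Kof_spec (hidx : StrictMono idx) {n : ℕ} (hn : idx 0 ≤ n) :
    idx (Kof idx n) ≤ n ∧ n < idx (Kof idx n + 1) := by
  have h1 : idx (Kof idx n) ≤ n :=
    Nat.findGreatest_spec (P := fun k => idx k ≤ n) (Nat.zero_le n) hn
  refine ⟨h1, ?_⟩
  by_contra h
  push_neg at h
  have hb : Kof idx n + 1 ≤ n := le_trans (hidx.le_apply) h
  exact Nat.findGreatest_is_greatest (P := fun k => idx k ≤ n)
    (Nat.lt_succ_self _) hb h

lemma Kof_eq (hidx : StrictMono idx) {j n : ℕ} (h1 : idx j ≤ n) (h2 : n < idx (j+1)) :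
    Kof idx n = j := by
  have hj : j ≤ Kof idx n :=
    Nat.le_findGreatest (le_trans hidx.le_apply h1) h1
  have h0 : idx 0 ≤ n := le_trans (hidx.monotone (Nat.zero_le j)) h1
  obtain ⟨hs1, hs2⟩ := Kof_spec hidx h0
  by_contra hne
  have hlt : j + 1 ≤ Kof idx n := by omega
  have := hidx.monotone hlt
  omega

lemma Kof_idx (hidx : StrictMono idx) (k : ℕ) : Kof idx (idx k) = k :=
  Kof_eq hidx (le_refl _) (hidx (Nat.lt_succ_self k))

lemma Kof_ge (hidx : StrictMono idx) {K n : ℕ} (h : idx K ≤ n) : K ≤ Kof idx n :=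
  Nat.le_findGreatest (le_trans hidx.le_apply h) h

lemma notMem_range (hidx : StrictMono idx) {n : ℕ} (h : idx (Kof idx n) ≠ n) :
    ∀ k, idx k ≠ n := by
  intro k hk
  exact h (by rw [← hk, Kof_idx hidx])

end Stmt10Aux

namespace Stmt10AuxB

open Stmt10Aux

/-- upper envelope within a block -/
def Ub (a idx : ℕ → ℕ) (n : ℕ) : ℕ :=
  a (Kof idx n + 1) - (idx (Kof idx n + 1) - n)

/-- the supersequence -/
noncomputable def bfun (g : ℝ → ℝ) (a idx : ℕ → ℕ) : ℕ → ℕ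
  | 0 => a 0 - idx 0
  | n+1 =>
    if idx (Kof idx (n+1)) = n + 1 then a (Kof idx (n+1))
    else if n + 1 ≤ idx 0 then a 0 - (idx 0 - (n+1))
    else max (bfun g a idx n + 1) (min (Ub a idx (n+1)) ⌊g (↑(n+1) : ℝ)⌋₊)

variable {g : ℝ → ℝ} {a idx : ℕ → ℕ}

lemma bfun_idx (hidx : StrictMono idx) (k : ℕ) : bfun g a idx (idx k) = a k := by
  rcases h : idx k with _ | n
  · have hk0 : k = 0 := by
      have h2 : k ≤ idx k := hidx.le_apply
      omega
    subst hk0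
    rw [bfun]
    omega
  · have hK : Kof idx (n+1) = k := by rw [← h, Kof_idx hidx]
    rw [bfun, hK, if_pos h]

lemma bfun_below (hidx : StrictMono idx) {n : ℕ} (hn : n ≤ idx 0) :
    bfun g a idx n = a 0 - (idx 0 - n) := by
  rcases n with _ | m
  · rw [bfun]; omega
  · rcases eq_or_lt_of_le hn with he | hlt
    · have := bfun_idx (g := g) (a := a) hidx 0
      rw [← he] at this ⊢
      rw [this]
      omega
    · have hne : idx (Kof idx (m+1)) ≠ m + 1 := by
        intro hc
        have := hidx.monotone (Nat.zero_le (Kof idx (m+1)))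
        omega
      rw [bfun, if_neg hne, if_pos hn]

lemma bfun_le_Ub (hidx : StrictMono idx) (ha : Monotone a)
    (hgap : ∀ k, idx (k+1) + a k ≤ idx k + a (k+1))
    (hlt : ∀ k, idx k < a k) :
    ∀ n, idx 0 ≤ n → bfun g a idx n ≤ Ub a idx n := by
  intro n
  induction n with
  | zero =>
      intro h0
      have h00 : idx 0 = 0 := by omega
      have hb : bfun g a idx 0 = a 0 := by rw [bfun]; omega
      have hK : Kof idx 0 = 0 := by
        have h' := Kof_idx hidx 0
        rw [h00] at h'
        exact h'
      rw [hb, Ub, hK]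
      have := hgap 0
      have := hlt 1
      omega
  | succ m ih =>
      intro h0
      by_cases hpt : idx (Kof idx (m+1)) = m + 1
      · set k := Kof idx (m+1) with hk
        rw [bfun, ← hk, if_pos hpt, Ub, ← hk]
        have := hgap k
        have := hlt (k+1)
        have := hidx (show k < k + 1 by omega)
        omega
      · have hlt0 : idx 0 < m + 1 := by
          rcases eq_or_lt_of_le h0 with he | h
          · exfalso
            apply hpt
            have h' := Kof_idx hidx 0
            rw [he] at h'
            rw [h']
            exact he
          · exact h
        have h0m : idx 0 ≤ m := by omega
        have ihm := ih h0m
        obtain ⟨hs1, hs2⟩ := Kof_spec hidx h0m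
        set K := Kof idx m with hK
        have hnr : ∀ j, idx j ≠ m + 1 := notMem_range hidx hpt
        have hlt2 : m + 1 < idx (K+1) := by
          have := hnr (K+1); omega
        have hKeq : Kof idx (m+1) = K := Kof_eq hidx (by omega) hlt2
        rw [bfun, if_neg hpt, if_neg (by omega)]
        rw [Ub, hKeq]
        rw [Ub, ← hK] at ihm
        have hlta := hlt (K+1)
        have : min (Ub a idx (m+1)) ⌊g (↑(m+1) : ℝ)⌋₊ ≤ Ub a idx (m+1) :=
          min_le_left _ _
        rw [Ub, hKeq] at this
        omega

lemma bfun_succ_ge (hidx : StrictMono idx) (ha : Monotone a)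
    (hgap : ∀ k, idx (k+1) + a k ≤ idx k + a (k+1))
    (hlt : ∀ k, idx k < a k) (n : ℕ) :
    bfun g a idx n + 1 ≤ bfun g a idx (n+1) := by
  by_cases hpt : idx (Kof idx (n+1)) = n + 1
  · set k := Kof idx (n+1) with hk
    rcases Nat.eq_zero_or_pos k with hk0 | hkpos
    · -- n+1 = idx 0
      have hpt0 : idx 0 = n + 1 := by rw [← hk0]; exact hpt
      have hbn : bfun g a idx n = a 0 - (idx 0 - n) := bfun_below hidx (by omega)
      rw [bfun, ← hk, if_pos hpt, hk0, hbn]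
      have := hlt 0
      omega
    · obtain ⟨j, hj⟩ : ∃ j, k = j + 1 := ⟨k - 1, by omega⟩
      have hidxj : idx j ≤ n := by
        have := hidx (show j < j + 1 by omega)
        rw [← hj, hpt] at this
        omega
      have h0n : idx 0 ≤ n := le_trans (hidx.monotone (Nat.zero_le j)) hidxj
      have hub := bfun_le_Ub (g := g) hidx ha hgap hlt n h0n
      have hKn : Kof idx n = j := by
        apply Kof_eq hidx hidxj
        rw [← hj, hpt]
        omega
      rw [Ub, hKn] at hub
      rw [bfun, ← hk, if_pos hpt, hj]
      have := hlt k
      rw [hj] at this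
      have h1 := hpt
      rw [hj] at h1
      omega
  · by_cases hble : n + 1 ≤ idx 0
    · have hbn : bfun g a idx n = a 0 - (idx 0 - n) := bfun_below hidx (by omega)
      rw [bfun, if_neg hpt, if_pos hble, hbn]
      have := hlt 0
      omega
    · rw [bfun, if_neg hpt, if_neg hble]
      exact le_max_left _ _

lemma bfun_pos (hidx : StrictMono idx) (ha : Monotone a)
    (hgap : ∀ k, idx (k+1) + a k ≤ idx k + a (k+1))
    (hlt : ∀ k, idx k < a k) (n : ℕ) : 1 ≤ bfun g a idx n := by
  induction n with
  | zero => rw [bfun]; have := hlt 0; omega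
  | succ m ih => have := bfun_succ_ge (g := g) hidx ha hgap hlt m; omega

lemma bfun_lower (hidx : StrictMono idx) {n : ℕ} (h0 : idx 0 ≤ n)
    (hne : idx (Kof idx n) ≠ n) :
    min (Ub a idx n) ⌊g (↑n : ℝ)⌋₊ ≤ bfun g a idx n := by
  rcases n with _ | m
  · exfalso
    apply hne
    have h00 : idx 0 = 0 := by omega
    have h' := Kof_idx hidx 0
    rw [h00] at h'
    rw [h']
    exact h00
  · have hble : ¬ (m + 1 ≤ idx 0) := by
      intro hc
      have he : idx 0 = m + 1 := by omega
      apply hne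
      have h' := Kof_idx hidx 0
      rw [he] at h'
      rw [h']
      exact he
    rw [bfun, if_neg hne, if_neg hble]
    exact le_max_right _ _

lemma bfun_upper (hidx : StrictMono idx) (ha : Monotone a)
    (hgm : ∀ i j : ℕ, 1 ≤ i → i ≤ j → g i ≤ g j) :
    ∀ n, 1 ≤ n → idx 0 ≤ n →
      bfun g a idx n ≤ max (a (Kof idx n) + (n - idx (Kof idx n))) (⌊g (↑n : ℝ)⌋₊ + n) := by
  intro n
  induction n with
  | zero => omega
  | succ m ih =>
      intro _ h0
      by_cases hpt : idx (Kof idx (m+1)) = m + 1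
      · refine le_trans ?_ (le_max_left _ _)
        rw [bfun, if_pos hpt]
        omega
      · have hlt0 : idx 0 < m + 1 := by
          rcases eq_or_lt_of_le h0 with he | h
          · exfalso
            apply hpt
            have h' := Kof_idx hidx 0
            rw [he] at h'
            rw [h']
            exact he
          · exact h
        have h0m : idx 0 ≤ m := by omega
        obtain ⟨hs1, hs2⟩ := Kof_spec hidx h0m
        set K := Kof idx m with hK
        have hnr : ∀ j, idx j ≠ m + 1 := notMem_range hidx hpt
        have hlt2 : m + 1 < idx (K+1) := by have := hnr (K+1); omega
        have hKeq : Kof idx (m+1) = K := Kof_eq hidx (by omega) hlt2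
        rw [bfun, if_neg hpt, if_neg (by omega), hKeq]
        have hmin : min (Ub a idx (m+1)) ⌊g (↑(m+1) : ℝ)⌋₊ ≤ ⌊g (↑(m+1) : ℝ)⌋₊ :=
          min_le_right _ _
        rcases Nat.eq_zero_or_pos m with hm0 | hmpos
        · -- m = 0, idx 0 = 0
          subst hm0
          have h00 : idx 0 = 0 := by omega
          have hb0 : bfun g a idx 0 = a 0 := by rw [bfun]; omega
          have hK0 : K = 0 := by
            have h' := Kof_idx hidx 0
            rw [h00] at h'
            rw [hK, h']
          rw [hb0, hK0, h00]
          omega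
        · have hfl : ⌊g (↑m : ℝ)⌋₊ ≤ ⌊g (↑(m+1) : ℝ)⌋₊ :=
            Nat.floor_mono (hgm m (m+1) hmpos (by omega))
          have ihm := ih hmpos h0m
          omega

end Stmt10AuxB


open Filter Stmt10Aux Stmt10AuxB

set_option maxHeartbeats 1000000 in
/-- Supersequence theorem: if `A ~ f` is strictly increasing, `g` is an asymptotically
stable growth function with `g(x)/x → ∞`, `g ≤ f` and `g⁻¹f(x+1) - g⁻¹f(x) ≥ 1` on
`[1,∞)`, then `A` has a strictly increasing supersequence `B ~ g`. -/
theorem stmt10 (f g : ℝ → ℝ) (hf : IsGrowthFun f) (hg : IsGrowthFun g)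
    (hgs : ∀ Δ > (0 : ℝ),
      Filter.Tendsto (fun x => g (x + Δ) / g x) Filter.atTop (nhds 1))
    (hgx : Filter.Tendsto (fun x => g x / x) Filter.atTop Filter.atTop)
    (hle : ∀ x ≥ (1 : ℝ), g x ≤ f x)
    (hinv : ∀ x ≥ (1 : ℝ), ∀ y z : ℝ, 1 ≤ y → g y = f x → 1 ≤ z → g z = f (x + 1) →
      1 ≤ z - y)
    (a : ℕ → ℕ) (ha : StrictMono a) (hapos : ∀ k, 0 < a k)
    (h1 : Filter.Tendsto (fun k : ℕ => (a k : ℝ) / f k) Filter.atTop (nhds 1)) :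
    ∃ b : ℕ → ℕ, StrictMono b ∧ (∀ n, 0 < b n) ∧
      Filter.Tendsto (fun n : ℕ => (b n : ℝ) / g n) Filter.atTop (nhds 1) ∧
      ∃ idx : ℕ → ℕ, StrictMono idx ∧ ∀ k, b (idx k) = a k := by
  classical
  obtain ⟨hgpos, hgmono, hgcont, hgtop⟩ := hg
  obtain ⟨hfpos, hfmono, hfcont, hftop⟩ := hf
  -- monotonicity helpers for g
  have hgmR : ∀ x y : ℝ, 1 ≤ x → x ≤ y → g x ≤ g y := by
    intro x y hx hxy
    exact hgmono.monotoneOn (Set.mem_Ici.mpr hx) (Set.mem_Ici.mpr (le_trans hx hxy)) hxy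
  -- existence of g-preimages of f(k+1)
  have hex : ∀ k : ℕ, ∃ y, 1 ≤ y ∧ g y = f ((k : ℝ) + 1) := by
    intro k
    have hk0 : (0:ℝ) ≤ (k:ℝ) := Nat.cast_nonneg k
    have hk1 : (1:ℝ) ≤ (k:ℝ) + 1 := by linarith
    have hgf : g 1 ≤ f ((k:ℝ)+1) := by
      refine le_trans (hle 1 le_rfl) ?_
      exact hfmono.monotoneOn (Set.mem_Ici.mpr le_rfl) (Set.mem_Ici.mpr hk1) hk1
    obtain ⟨z, hz1, hz2⟩ :
        ∃ z : ℝ, 1 ≤ z ∧ f ((k:ℝ)+1) ≤ g z := by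
      have := (hgtop.eventually_ge_atTop (f ((k:ℝ)+1))).and (eventually_ge_atTop (1:ℝ))
      obtain ⟨z, hz⟩ := this.exists
      exact ⟨z, hz.2, hz.1⟩
    have hsub : Set.Icc (1:ℝ) z ⊆ Set.Ici 1 := Set.Icc_subset_Ici_self
    have hivt := intermediate_value_Icc hz1 (hgcont.mono hsub)
    have hmem : f ((k:ℝ)+1) ∈ Set.Icc (g 1) (g z) := ⟨hgf, hz2⟩
    obtain ⟨y, hy, hyeq⟩ := hivt hmem
    exact ⟨y, hy.1, hyeq⟩
  choose X hX1 hXg using hex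
  have hXstep : ∀ k, X k + 1 ≤ X (k+1) := by
    intro k
    have hx1 : (1:ℝ) ≤ (k:ℝ) + 1 := by
      have : (0:ℝ) ≤ (k:ℝ) := Nat.cast_nonneg k
      linarith
    have hgz : g (X (k+1)) = f (((k:ℝ)+1) + 1) := by
      have h := hXg (k+1)
      push_cast at h
      exact h
    have := hinv ((k:ℝ)+1) hx1 (X k) (X (k+1)) (hX1 k) (hXg k) (hX1 (k+1)) hgz
    linarith
  have hXlb : ∀ k : ℕ, (k:ℝ) + 1 ≤ X k := by
    intro k
    induction k with
    | zero => simpa using hX1 0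
    | succ m ih =>
        have := hXstep m
        push_cast
        push_cast at ih
        linarith
  have hXtend : Tendsto X atTop atTop := by
    apply tendsto_atTop_mono hXlb
    exact tendsto_atTop_add_const_right atTop 1 tendsto_natCast_atTop_atTop
  -- the integer landmarks
  set N : ℕ → ℕ := fun k => match k with | 0 => 0 | j+1 => ⌈X j⌉₊ with hNdef
  have hN : ∀ k, N k + 1 ≤ N (k+1) := by
    intro k
    match k with
    | 0 =>
        show 0 + 1 ≤ ⌈X 0⌉₊
        have : (0:ℝ) < X 0 := lt_of_lt_of_le one_pos (hX1 0)
        simpa using Nat.one_le_ceil_iff.mpr this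
    | j+1 =>
        show ⌈X j⌉₊ + 1 ≤ ⌈X (j+1)⌉₊
        have h0 : (0:ℝ) ≤ X j := le_trans zero_le_one (hX1 j)
        calc ⌈X j⌉₊ + 1 = ⌈X j + 1⌉₊ := (Nat.ceil_add_one h0).symm
        _ ≤ ⌈X (j+1)⌉₊ := Nat.ceil_mono (hXstep j)
  have ha0 : 1 ≤ a 0 := hapos 0
  set idx : ℕ → ℕ := idxf N a with hidxdef
  have hidxm : StrictMono idx := idxf_strictMono ha hN
  have hlt : ∀ k, idx k < a k := idxf_lt_a ha ha0
  have hgap : ∀ k, idx (k+1) + a k ≤ idx k + a (k+1) := idxf_succ_le ha.monotone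
  have hidxleN : ∀ k, idx k ≤ N k := fun k => idxf_le_N k
  have hgm : ∀ i j : ℕ, 1 ≤ i → i ≤ j → g i ≤ g j := by
    intro i j hi hij
    exact hgmR i j (by exact_mod_cast hi) (by exact_mod_cast hij)
  -- positivity of f at naturals ≥ 1
  have hfk_pos : ∀ k : ℕ, 1 ≤ k → 0 < f k := by
    intro k hk
    exact hfpos k (by exact_mod_cast hk)
  -- ratio bounds between a and f
  have hfa : ∀ δ : ℝ, 0 < δ → ∀ᶠ k : ℕ in atTop,
      (1-δ) * a k ≤ f k ∧ f k ≤ (1+δ) * a k := by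
    intro δ hδ
    have hη : (0:ℝ) < min (δ/2) (1/2) := lt_min (by linarith) (by norm_num)
    set η := min (δ/2) (1/2) with hηdef
    have hη1 : η ≤ 1/2 := min_le_right _ _
    have hη2 : η ≤ δ/2 := min_le_left _ _
    have h2 : ∀ᶠ k : ℕ in atTop, dist ((a k:ℝ)/f k) 1 < η :=
      (Metric.tendsto_nhds.mp h1) η hη
    filter_upwards [h2, eventually_ge_atTop 1] with k hk hk1
    have hfk : 0 < f k := hfk_pos k hk1
    rw [Real.dist_eq, abs_lt] at hk
    have hr1 : (a k:ℝ)/f k < 1 + η := by linarith [hk.2]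
    have hr2 : 1 - η < (a k:ℝ)/f k := by linarith [hk.1]
    have ha1 : (a k:ℝ) < (1+η) * f k := by
      have := mul_lt_mul_of_pos_right hr1 hfk
      rwa [div_mul_cancel₀] at this
      exact ne_of_gt hfk
    have ha2 : (1-η) * f k < (a k:ℝ) := by
      have := mul_lt_mul_of_pos_right hr2 hfk
      rwa [div_mul_cancel₀] at this
      exact ne_of_gt hfk
    have hak0 : (0:ℝ) ≤ a k := Nat.cast_nonneg _
    constructor
    · nlinarith [mul_nonneg hak0 (show (0:ℝ) ≤ δ - η by linarith),
        mul_nonneg (mul_nonneg hak0 hδ.le) hη.le]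
    · nlinarith [mul_nonneg hfk.le (show (0:ℝ) ≤ δ - 2*η by linarith),
        mul_nonneg (mul_nonneg hfk.le hδ.le) (show (0:ℝ) ≤ 1 - 2*η by linarith)]
  -- upper ratio bound for g(idx k)
  have hAup : ∀ δ : ℝ, 0 < δ → δ ≤ 1 → ∀ᶠ k : ℕ in atTop,
      g (idx k) ≤ (1+δ) * a k := by
    intro δ hδ hδ1
    set η := δ/3 with hηdef
    have hη : 0 < η := by rw [hηdef]; linarith
    have hη3 : η ≤ 1/3 := by rw [hηdef]; linarith
    have e1 : ∀ᶠ j : ℕ in atTop, g (X j + 1) / g (X j) < 1 + η := by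
      have hcomp : Tendsto (fun j : ℕ => g (X j + 1) / g (X j)) atTop (nhds 1) :=
        (hgs 1 one_pos).comp hXtend
      exact hcomp.eventually_lt_const (by linarith)
    have e2 : ∀ᶠ j : ℕ in atTop, f ((j+1 : ℕ)) ≤ (1+η) * a (j+1) := by
      have := hfa η hη
      exact (tendsto_add_atTop_nat 1).eventually (this.mono (fun k hk => hk.2))
    rw [eventually_atTop]
    obtain ⟨J, hJ⟩ := eventually_atTop.mp (e1.and e2)
    refine ⟨J + 1, ?_⟩
    intro k hk
    obtain ⟨j, rfl⟩ : ∃ j, k = j + 1 := ⟨k - 1, by omega⟩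
    obtain ⟨he1, he2⟩ := hJ j (by omega)
    have hXj1 : (1:ℝ) ≤ X j := hX1 j
    have hgXpos : 0 < g (X j) := hgpos (X j) hXj1
    have hstep1 : g (idx (j+1)) ≤ g (⌈X j⌉₊) := by
      apply hgmR
      · have : j + 1 ≤ idx (j+1) := hidxm.le_apply
        exact_mod_cast Nat.one_le_iff_ne_zero.mpr (by omega)
      · have : idx (j+1) ≤ N (j+1) := hidxleN (j+1)
        have hNj : N (j+1) = ⌈X j⌉₊ := rfl
        rw [hNj] at this
        exact_mod_cast this
    have hstep2 : g (⌈X j⌉₊) ≤ g (X j + 1) := by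
      apply hgmR
      · exact_mod_cast Nat.one_le_ceil_iff.mpr (by linarith)
      · exact (Nat.ceil_lt_add_one (by linarith : (0:ℝ) ≤ X j)).le
    have hstep3 : g (X j + 1) ≤ (1+η) * g (X j) := by
      have := mul_lt_mul_of_pos_right he1 hgXpos
      rw [div_mul_cancel₀] at this
      · exact this.le
      · exact ne_of_gt hgXpos
    have hgXf : g (X j) = f ((j+1 : ℕ)) := by
      rw [hXg j]
      norm_num
    have hak0 : (0:ℝ) ≤ a (j+1) := Nat.cast_nonneg _
    have hfj : f ((j+1:ℕ)) ≤ (1+η) * a (j+1) := he2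
    calc g (idx (j+1)) ≤ (1+η) * g (X j) := by linarith
    _ = (1+η) * f ((j+1:ℕ)) := by rw [hgXf]
    _ ≤ (1+η) * ((1+η) * a (j+1)) := by nlinarith [mul_nonneg hak0 hη.le]
    _ ≤ (1+δ) * a (j+1) := by
        nlinarith [mul_nonneg (mul_nonneg hak0 hη.le) (show (0:ℝ) ≤ 1 - η by linarith)]
  -- lower ratio bound for g(idx k)
  have hAlo : ∀ δ : ℝ, 0 < δ → δ ≤ 1 → ∀ᶠ k : ℕ in atTop,
      (1-δ) * a k ≤ g (idx k) := by
    intro δ hδ hδ1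
    set ε := δ/3 with hεdef
    have hε : 0 < ε := by rw [hεdef]; linarith
    set M := 3/δ with hMdef
    have hM : 0 < M := by rw [hMdef]; positivity
    have hMε : M * ε = 1 := by rw [hMdef, hεdef]; field_simp
    obtain ⟨K1, hK1⟩ := eventually_atTop.mp ((hfa ε hε).and (eventually_ge_atTop 1))
    have hK1' : 1 ≤ K1 + 1 := by omega
    set C := (a (K1+1) : ℝ) with hCdef
    obtain ⟨X0, hX0⟩ := eventually_atTop.mp (hgx.eventually_ge_atTop M)
    have hgM : ∀ x : ℝ, max X0 1 ≤ x → M * x ≤ g x := by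
      intro x hx
      have hx1 : (1:ℝ) ≤ x := le_trans (le_max_right _ _) hx
      have hx0 : 0 < x := by linarith
      have := hX0 x (le_trans (le_max_left _ _) hx)
      rw [le_div_iff₀ hx0] at this
      linarith
    have hatop : Tendsto (fun k : ℕ => (a k : ℝ)) atTop atTop :=
      tendsto_natCast_atTop_atTop.comp ha.tendsto_atTop
    have hktop : Tendsto (fun k : ℕ => (k : ℝ)) atTop atTop := tendsto_natCast_atTop_atTop
    filter_upwards [eventually_ge_atTop (K1+1),
      hktop.eventually_ge_atTop (max X0 1),
      hatop.eventually_ge_atTop (C / ε)] with k hk1 hk2 hk3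
    have hCa : C ≤ ε * a k := by
      rw [div_le_iff₀ hε] at hk3
      linarith
    obtain ⟨j, hjk, hjor, hjeq⟩ := idxf_decomp (N := N) ha.monotone k
    have haj : (a j : ℝ) ≤ a k := by exact_mod_cast ha.monotone hjk
    have hidxcast : (idx k : ℝ) + a j = (idx j : ℝ) + a k := by exact_mod_cast hjeq
    have hidxk_ge : (a k : ℝ) - a j ≤ (idx k : ℝ) := by
      have h0 : (0:ℝ) ≤ idx j := Nat.cast_nonneg _
      linarith
    have hidxk_big : max X0 1 ≤ (idx k : ℝ) := by
      have : k ≤ idx k := hidxm.le_apply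
      have : (k:ℝ) ≤ idx k := by exact_mod_cast this
      linarith
    have hgMk : M * (idx k) ≤ g (idx k) := hgM _ hidxk_big
    have hak0 : (0:ℝ) ≤ a k := Nat.cast_nonneg _
    by_cases hc : K1 + 1 ≤ j ∧ idx j = N j
    · obtain ⟨hK1j, hNj⟩ := hc
      obtain ⟨i, rfl⟩ : ∃ i, j = i + 1 := ⟨j - 1, by omega⟩
      have hflow : (1-ε) * a (i+1) ≤ f ((i+1:ℕ)) := (hK1 (i+1) (by omega)).1.1
      have hgNi : g (X i) ≤ g (⌈X i⌉₊) :=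
        hgmR _ _ (hX1 i) (Nat.le_ceil _)
      have hgidxj : f ((i+1:ℕ)) ≤ g (idx (i+1)) := by
        have h1' : g (X i) = f ((i+1:ℕ)) := by rw [hXg i]; norm_num
        have h2' : idx (i+1) = ⌈X i⌉₊ := by rw [hNj]
        rw [← h1', h2']
        exact hgNi
      have hgk_ge_j : g (idx (i+1)) ≤ g (idx k) := by
        apply hgmR
        · have : i + 1 ≤ idx (i+1) := hidxm.le_apply
          exact_mod_cast Nat.one_le_iff_ne_zero.mpr (by omega)
        · exact_mod_cast hidxm.monotone hjk
      have hε3 : ε ≤ 1/3 := by rw [hεdef]; linarith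
      by_cases hc2 : (1-ε) * a k ≤ (a (i+1) : ℝ)
      · have hj0 : (0:ℝ) ≤ a (i+1) := Nat.cast_nonneg _
        have h' : (1-ε) * ((1-ε) * a k) ≤ (1-ε) * (a (i+1) : ℝ) :=
          mul_le_mul_of_nonneg_left hc2 (by linarith)
        have hx1 : (0:ℝ) ≤ ε * a k := mul_nonneg hε.le hak0
        have hx2 : (0:ℝ) ≤ ε * (ε * a k) := mul_nonneg hε.le hx1
        have key : (1-δ) * (a k:ℝ) ≤ (1-ε)*((1-ε)* a k) := by nlinarith [hx1, hx2]
        linarith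
      · push_neg at hc2
        have h1' : M * ((a k:ℝ) - a (i+1)) ≤ M * idx k :=
          mul_le_mul_of_nonneg_left hidxk_ge hM.le
        have h2' : M * (ε * a k) ≤ M * ((a k:ℝ) - a (i+1)) :=
          mul_le_mul_of_nonneg_left (by linarith) hM.le
        have h3' : M * (ε * (a k:ℝ)) = a k := by
          rw [← mul_assoc, hMε]; ring
        have h4' : (0:ℝ) ≤ δ * a k := mul_nonneg hδ.le hak0
        linarith
    · have hjle : j ≤ K1 + 1 := by
        rcases hjor with h | h
        · omega
        · by_contra hcon
          exact hc ⟨by omega, h⟩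
      have hajC : (a j : ℝ) ≤ C := by
        rw [hCdef]
        exact_mod_cast ha.monotone hjle
      have hM3 : 3 ≤ M := by
        rw [hMdef, le_div_iff₀ hδ]
        linarith
      have h1' : (1-ε) * a k ≤ (idx k : ℝ) := by linarith
      have h2' : M * ((1-ε) * a k) ≤ M * idx k :=
        mul_le_mul_of_nonneg_left h1' hM.le
      have h3' : M * (ε * (a k:ℝ)) = a k := by
        rw [← mul_assoc, hMε]; ring
      have h4' : (a k : ℝ) ≤ M * ((1-ε) * a k) := by
        have h5' : (0:ℝ) ≤ (M - 2) * a k :=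
          mul_nonneg (by linarith) hak0
        nlinarith
      have h6' : (0:ℝ) ≤ δ * a k := mul_nonneg hδ.le hak0
      linarith
  -- the sequence b
  have hbidx : ∀ k, bfun g a idx (idx k) = a k := fun k => bfun_idx hidxm k
  have hbsucc : ∀ n, bfun g a idx n + 1 ≤ bfun g a idx (n+1) :=
    fun n => bfun_succ_ge hidxm ha.monotone hgap hlt n
  have hbmono : StrictMono (bfun g a idx) :=
    strictMono_nat_of_lt_succ (fun n => by have := hbsucc n; omega)
  have hbpos : ∀ n, 0 < bfun g a idx n :=
    fun n => bfun_pos hidxm ha.monotone hgap hlt n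
  refine ⟨bfun g a idx, hbmono, hbpos, ?_, idx, hidxm, hbidx⟩
  rw [Metric.tendsto_nhds]
  intro δ hδ
  set ε := min (δ/4) (1/4) with hεdef
  have hε : 0 < ε := lt_min (by linarith) (by norm_num)
  have hε4 : ε ≤ 1/4 := min_le_right _ _
  have hεδ : ε ≤ δ/4 := min_le_left _ _
  have hε1 : ε ≤ 1 := by linarith
  obtain ⟨KA, hKA⟩ := eventually_atTop.mp ((hAup ε hε hε1).and (hAlo ε hε hε1))
  obtain ⟨XB, hXB⟩ := eventually_atTop.mp (hgx.eventually_ge_atTop (1/ε))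
  have hgnB : ∀ x : ℝ, max XB 1 ≤ x → x ≤ ε * g x := by
    intro x hx
    have hx1 : (1:ℝ) ≤ x := le_trans (le_max_right _ _) hx
    have hx0 : (0:ℝ) < x := lt_of_lt_of_le one_pos hx1
    have h := hXB x (le_trans (le_max_left _ _) hx)
    rw [le_div_iff₀ hx0] at h
    calc x = ε * (1/ε * x) := by field_simp
    _ ≤ ε * g x := mul_le_mul_of_nonneg_left h hε.le
  have hgcast : Tendsto (fun n : ℕ => g n) atTop atTop :=
    hgtop.comp tendsto_natCast_atTop_atTop
  obtain ⟨K2, hK2⟩ := eventually_atTop.mp (hgcast.eventually_ge_atTop (1/ε))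
  filter_upwards [eventually_ge_atTop (idx (max KA 1)), eventually_ge_atTop K2,
      eventually_ge_atTop 1, eventually_ge_atTop ⌈max XB 1⌉₊] with n hn1 hn2 hn3 hn4
  have h0n : idx 0 ≤ n := le_trans (hidxm.monotone (Nat.zero_le (max KA 1))) hn1
  obtain ⟨hs1, hs2⟩ := Kof_spec hidxm h0n
  set K := Kof idx n with hKdef
  have hKge : max KA 1 ≤ K := Kof_ge hidxm hn1
  have hK1n : 1 ≤ K := le_trans (le_max_right _ _) hKge
  have hKA1 : KA ≤ K := le_trans (le_max_left _ _) hKge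
  have hgbK := hKA K hKA1
  have hgbK1 := hKA (K+1) (by omega)
  have hgn1 : 1/ε ≤ g n := hK2 n hn2
  have hgnpos : 0 < g n := lt_of_lt_of_le (by positivity) hgn1
  have hncast : max XB 1 ≤ (n:ℝ) := le_trans (Nat.le_ceil _) (by exact_mod_cast hn4)
  have hneps : (n:ℝ) ≤ ε * g n := hgnB n hncast
  have hidxK1big : max XB 1 ≤ (idx (K+1) : ℝ) :=
    le_trans hncast (by exact_mod_cast hs2.le)
  have hidxK1eps : (idx (K+1):ℝ) ≤ ε * g (idx (K+1)) := hgnB _ hidxK1big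
  have hgnK : g (idx K) ≤ g n := by
    apply hgmR
    · have h1' : 1 ≤ idx K := le_trans hK1n hidxm.le_apply
      exact_mod_cast h1'
    · exact_mod_cast hs1
  have hgnK1 : g n ≤ g (idx (K+1)) := by
    apply hgmR
    · exact_mod_cast hn3
    · exact_mod_cast hs2.le
  have hak0 : (0:ℝ) ≤ a K := Nat.cast_nonneg _
  have hak10 : (0:ℝ) ≤ a (K+1) := Nat.cast_nonneg _
  have h1εg : 1 ≤ ε * g n := by
    calc (1:ℝ) = ε * (1/ε) := by field_simp
    _ ≤ ε * g n := mul_le_mul_of_nonneg_left hgn1 hε.le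
  have hblo : (1-3*ε) * g n ≤ (bfun g a idx n : ℝ) := by
    by_cases hpt : idx K = n
    · rw [← hpt, hbidx K]
      have hp1 := mul_le_mul_of_nonneg_left hgbK.1 (show (0:ℝ) ≤ 1-3*ε by linarith)
      have hp2 : (0:ℝ) ≤ ε * a K := mul_nonneg hε.le hak0
      have hp3 : (0:ℝ) ≤ ε * (ε * a K) := mul_nonneg hε.le hp2
      have hgg : g ((idx K : ℕ) : ℝ) = g (idx K) := rfl
      nlinarith [hp1, hp2, hp3]
    · have hlow := bfun_lower (g := g) (a := a) hidxm h0n (by rw [← hKdef]; exact hpt)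
      rcases le_total (Ub a idx n) ⌊g (n:ℝ)⌋₊ with hm | hm
      · rw [min_eq_left hm] at hlow
        have hUdef : Ub a idx n = a (K+1) - (idx (K+1) - n) := by
          rw [Ub, ← hKdef]
        have h2' : a (K+1) ≤ Ub a idx n + idx (K+1) := by
          have := hlt (K+1)
          omega
        have hUcast : (a (K+1):ℝ) - idx (K+1) ≤ (Ub a idx n : ℝ) := by
          have h3' := (Nat.cast_le (α := ℝ)).mpr h2'
          push_cast at h3'
          linarith
        have hbnR : (a (K+1):ℝ) - idx (K+1) ≤ (bfun g a idx n:ℝ) :=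
          le_trans hUcast (by exact_mod_cast hlow)
        have hp1 := mul_le_mul_of_nonneg_left hgnK1 (show (0:ℝ) ≤ 1-3*ε by linarith)
        have hp2 := mul_le_mul_of_nonneg_left hgbK1.1 (show (0:ℝ) ≤ 1-2*ε by linarith)
        have hp3 : (0:ℝ) ≤ ε * a (K+1) := mul_nonneg hε.le hak10
        have hp4 : (0:ℝ) ≤ ε * (ε * a (K+1)) := mul_nonneg hε.le hp3
        nlinarith [hp1, hp2, hp3, hp4, hidxK1eps, hbnR]
      · rw [min_eq_right hm] at hlow
        have hfl : g (n:ℝ) - 1 ≤ (⌊g (n:ℝ)⌋₊ : ℝ) := by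
          have := Nat.lt_floor_add_one (g (n:ℝ))
          linarith
        have hblR : (⌊g (n:ℝ)⌋₊:ℝ) ≤ (bfun g a idx n : ℝ) := by exact_mod_cast hlow
        have hp : (0:ℝ) ≤ ε * g n := by linarith
        linarith
  have hbup : (bfun g a idx n : ℝ) ≤ (1+3*ε) * g n := by
    by_cases hpt : idx K = n
    · rw [← hpt, hbidx K]
      have hp1 := mul_le_mul_of_nonneg_left hgbK.2 (show (0:ℝ) ≤ 1+3*ε by linarith)
      have hp2 : (0:ℝ) ≤ ε * a K * (2 - 3*ε) :=
        mul_nonneg (mul_nonneg hε.le hak0) (by linarith)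
      nlinarith [hp1, hp2]
    · have hup := bfun_upper (g := g) hidxm ha.monotone hgm n hn3 h0n
      rw [← hKdef] at hup
      rcases le_total (a K + (n - idx K)) (⌊g (n:ℝ)⌋₊ + n) with hmx | hmx
      · rw [max_eq_right hmx] at hup
        have hcast : (bfun g a idx n : ℝ) ≤ (⌊g (n:ℝ)⌋₊:ℝ) + n := by
          exact_mod_cast hup
        have hfl : (⌊g (n:ℝ)⌋₊:ℝ) ≤ g n := Nat.floor_le hgnpos.le
        have hp : (0:ℝ) ≤ ε * g n := by linarith
        linarith
      · rw [max_eq_left hmx] at hup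
        have h2' : bfun g a idx n ≤ a K + n := by omega
        have hcast : (bfun g a idx n : ℝ) ≤ (a K:ℝ) + n := by exact_mod_cast h2'
        have hgKn : (1-ε) * a K ≤ g n := le_trans hgbK.2 hgnK
        have hp1 := mul_le_mul_of_nonneg_left hgKn (show (0:ℝ) ≤ 1+2*ε by linarith)
        have hp2 : (0:ℝ) ≤ ε * a K * (1 - 2*ε) :=
          mul_nonneg (mul_nonneg hε.le hak0) (by linarith)
        nlinarith [hp1, hp2, hneps]
  rw [Real.dist_eq, abs_lt]
  have hq1 : (1-3*ε) ≤ (bfun g a idx n:ℝ)/g n := by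
    rw [le_div_iff₀ hgnpos]
    linarith
  have hq2 : (bfun g a idx n:ℝ)/g n ≤ 1+3*ε := by
    rw [div_le_iff₀ hgnpos]
    linarith
  constructor <;> [linarith; linarith]
end

section
/- Let A = {a_k} be a strictly increasing sequence of positive integers with a_k ~ 3^k. Then there does not exist a strictly increasing sequence of positive integers B = {b_n} with b_n ~ 2^n such that A is a subsequence of B. -/
/-!
If `b_n ~ 2^n` and `a_k = b_{n_k}` with `a_k ~ 3^k`, then `2^{n_k} ~ 3^k`, so the ratio of
consecutive terms `2^{n_{k+1} - n_k}` tends to `3`. But a power of `2` is never within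
distance `1` of `3`.
-/

open Filter Topology Asymptotics

theorem Asymptotics.IsEquivalent.tendsto_succ_div {𝕜 : Type*} [NormedField 𝕜] {u v : ℕ → 𝕜}
    {r : 𝕜} (huv : u ~[atTop] v) (hv : Tendsto (fun k ↦ v (k + 1) / v k) atTop (𝓝 r)) :
    Tendsto (fun k ↦ u (k + 1) / u k) atTop (𝓝 r) :=
  ((huv.comp_tendsto (tendsto_add_atTop_nat 1)).div huv).symm.tendsto_nhds hv

theorem not_tendsto_two_pow_nhds_three (d : ℕ → ℕ) :
    ¬ Tendsto (fun k ↦ (2 : ℝ) ^ d k) atTop (𝓝 3) := by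
  intro h
  obtain ⟨k, hk⟩ := (h.eventually (Metric.ball_mem_nhds 3 one_pos)).exists
  rw [Real.dist_eq, abs_sub_lt_iff] at hk
  rcases Nat.lt_or_ge (d k) 2 with hd | hd
  · have : (2 : ℝ) ^ d k ≤ 2 ^ 1 := pow_le_pow_right₀ one_le_two (by omega)
    linarith
  · have : (2 : ℝ) ^ 2 ≤ 2 ^ d k := pow_le_pow_right₀ one_le_two hd
    linarith

theorem stmt11_general (a : ℕ → ℕ)
    (h1 : Filter.Tendsto (fun k : ℕ => (a k : ℝ) / 3 ^ k) Filter.atTop (nhds 1)) :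
    ¬ ∃ b : ℕ → ℕ, StrictMono b ∧ (∀ n, 0 < b n) ∧
      Filter.Tendsto (fun n : ℕ => (b n : ℝ) / 2 ^ n) Filter.atTop (nhds 1) ∧
      ∃ idx : ℕ → ℕ, StrictMono idx ∧ ∀ k, b (idx k) = a k := by
  rintro ⟨b, -, -, hb, idx, hidx, hba⟩
  have ha3 : (fun k ↦ (a k : ℝ)) ~[atTop] fun k ↦ (3 : ℝ) ^ k := isEquivalent_of_tendsto_one h1
  have ha2 : (fun k ↦ (a k : ℝ)) ~[atTop] fun k ↦ (2 : ℝ) ^ idx k := by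
    refine isEquivalent_of_tendsto_one ?_
    simpa [Function.comp_def, Pi.div_def, hba] using hb.comp hidx.tendsto_atTop
  have hratio := (ha2.symm.trans ha3).tendsto_succ_div (r := 3) <| by
    simp [pow_succ]
  refine not_tendsto_two_pow_nhds_three (fun k ↦ idx (k + 1) - idx k) (hratio.congr fun k ↦ ?_)
  exact (pow_sub₀ 2 two_ne_zero (hidx k.lt_succ_self).le).symm

/-- No strictly increasing sequence of positive integers `b_n ~ 2^n` contains a strictly
increasing sequence `a_k ~ 3^k` as a subsequence. -/
theorem stmt11 (a : ℕ → ℕ) (ha : StrictMono a) (hapos : ∀ k, 0 < a k)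
    (h1 : Filter.Tendsto (fun k : ℕ => (a k : ℝ) / 3 ^ k) Filter.atTop (nhds 1)) :
    ¬ ∃ b : ℕ → ℕ, StrictMono b ∧ (∀ n, 0 < b n) ∧
      Filter.Tendsto (fun n : ℕ => (b n : ℝ) / 2 ^ n) Filter.atTop (nhds 1) ∧
      ∃ idx : ℕ → ℕ, StrictMono idx ∧ ∀ k, b (idx k) = a k :=
  stmt11_general a h1
end

section
/- Let u > v be positive integers and suppose u = v^r for no integer r ≥ 2 (and u ≠ v). Then there is no strictly increasing sequence of positive integers {n_k} with lim_{k→∞} v^{n_k}/u^k = 1. -/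
/-!
Put `a k = v ^ n k / u ^ k` and `d k = n (k + 1) - n k ≥ 1`. Then
`a (k + 1) = a k * (v ^ d k / u)`, so `a k → 1` forces `v ^ d k → u`. A sequence of natural
numbers converging in `ℝ` is eventually constant, hence `v ^ d k = u` for some `k`, i.e. `u = v`
or `u` is a proper power of `v`.
-/

open Filter Topology

theorem Filter.Tendsto.tendsto_one_of_succ_eq_mul {K : Type*} [NormedField K] {a c : ℕ → K}
    (ha : Tendsto a atTop (𝓝 1)) (hac : ∀ k, a (k + 1) = a k * c k) :
    Tendsto c atTop (𝓝 1) := by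
  have hquot : Tendsto (fun k => a (k + 1) / a k) atTop (𝓝 1) := by
    have h := (ha.comp (tendsto_add_atTop_nat 1)).div ha one_ne_zero
    rwa [div_one] at h
  refine hquot.congr' ?_
  filter_upwards [ha.eventually_ne one_ne_zero] with k hk
  rw [hac, mul_div_cancel_left₀ _ hk]

theorem Nat.eventually_eq_of_tendsto_cast_real {m : ℕ → ℕ} {N : ℕ}
    (h : Tendsto (fun k => (m k : ℝ)) atTop (𝓝 N)) : ∀ᶠ k in atTop, m k = N := by
  rw [← tendsto_pure, ← nhds_discrete]
  exact Nat.isClosedEmbedding_coe_real.isEmbedding.tendsto_nhds_iff.mpr h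

theorem stmt13_general (u v : ℕ) (huv : v < u)
    (hpow : ∀ r : ℕ, 2 ≤ r → u ≠ v ^ r) :
    ¬ ∃ n : ℕ → ℕ, StrictMono n ∧ (∀ k, 0 < n k) ∧
      Filter.Tendsto (fun k : ℕ => (v : ℝ) ^ n k / (u : ℝ) ^ k) Filter.atTop
        (nhds 1) := by
  rintro ⟨n, hmono, -, hlim⟩
  set d : ℕ → ℕ := fun k => n (k + 1) - n k
  have hd : ∀ k, n (k + 1) = n k + d k := fun k =>
    (Nat.add_sub_of_le (hmono k.lt_succ_self).le).symm
  have hstep : ∀ k, (v : ℝ) ^ n (k + 1) / (u : ℝ) ^ (k + 1)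
      = (v : ℝ) ^ n k / (u : ℝ) ^ k * ((v : ℝ) ^ d k / u) := fun k => by
    rw [hd, pow_add, pow_succ, div_mul_div_comm]
  have hu : (u : ℝ) ≠ 0 := Nat.cast_ne_zero.mpr (by omega)
  have hvd : Tendsto (fun k => ((v ^ d k : ℕ) : ℝ)) atTop (𝓝 u) := by
    simpa [div_mul_cancel₀ _ hu] using (hlim.tendsto_one_of_succ_eq_mul hstep).mul_const (u : ℝ)
  obtain ⟨k, hk⟩ := (Nat.eventually_eq_of_tendsto_cast_real hvd).exists
  have hdk : 1 ≤ d k := Nat.sub_pos_of_lt (hmono k.lt_succ_self)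
  rcases hdk.eq_or_lt with h1 | h2
  · rw [← h1, pow_one] at hk
    exact huv.ne hk
  · exact hpow (d k) h2 hk.symm

/-- If `u > v` are positive integers with `u` not a power `v^r` (`r ≥ 2`), then there is
no strictly increasing sequence of positive integers `n_k` with `v^{n_k}/u^k → 1`. -/
theorem stmt13 (u v : ℕ) (hv : 0 < v) (huv : v < u)
    (hpow : ∀ r : ℕ, 2 ≤ r → u ≠ v ^ r) :
    ¬ ∃ n : ℕ → ℕ, StrictMono n ∧ (∀ k, 0 < n k) ∧
      Filter.Tendsto (fun k : ℕ => (v : ℝ) ^ n k / (u : ℝ) ^ k) Filter.atTop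
        (nhds 1) :=
  stmt13_general u v huv hpow
end

section
/- Let u and v be positive integers with u > v ≥ 2. There exist strictly increasing sequences of positive integers A = {a_k} with a_k ~ u^k and B = {b_n} with b_n ~ v^n such that A is a subsequence of B if and only if u = v^r for some integer r ≥ 2. And in fact, for every strictly increasing sequence A with a_k ~ u^k such a supersequence B exists iff u = v^r. -/
/-!
If `b (idx k) = a k` with `a k ~ u^k` and `b n ~ v^n`, then `u^k ~ v^(idx k)`; dividing consecutive
terms gives `v^(idx (k+1) - idx k) → u`, and a convergent sequence of naturals is eventually
constant, so `u` is a power of `v`.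

Conversely, if `u = v^r`, the supersequence is obtained by filling the block between `a q` (at
position `q r`) and `a (q+1)` with `a q v, …, a q v^(r-1)`, which stays increasing once
`v^(r-1) a q < a (q+1)`; finitely many initial terms are kept and padded by consecutive integers.
-/

open Filter Topology Asymptotics

theorem eventually_eq_of_tendsto_natCast {α : Type*} {l : Filter α} {f : α → ℕ} {n : ℕ}
    (h : Tendsto (fun x => (f x : ℝ)) l (𝓝 (n : ℝ))) : ∀ᶠ x in l, f x = n := by
  have h' : Tendsto f l (𝓝 n) := Nat.isClosedEmbedding_coe_real.tendsto_nhds_iff.mpr h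
  rwa [nhds_discrete, tendsto_pure] at h'

theorem tendsto_pow_sub_of_isEquivalent {u v : ℝ} (hu : u ≠ 0) (hv : v ≠ 0) {i : ℕ → ℕ}
    (hi : Monotone i) (h : (fun k => u ^ k) ~[atTop] fun k => v ^ i k) :
    Tendsto (fun k => v ^ (i (k + 1) - i k)) atTop (𝓝 u) := by
  have hdiv := (h.comp_tendsto (tendsto_add_atTop_nat 1)).div h
  refine (hdiv.tendsto_nhds (tendsto_const_nhds.congr fun k => ?_)).congr fun k => ?_
  · simp [pow_succ, hu]
  · simp [pow_sub₀ v hv (hi k.le_succ), div_eq_mul_inv]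

theorem eventually_mul_add_lt_of_tendsto_div_pow {x : ℕ → ℝ} {u c C : ℝ} (hu : 1 < u)
    (hc : c < u) (hx : Tendsto (fun k => x k / u ^ k) atTop (𝓝 1)) :
    ∀ᶠ k in atTop, c * x k + C * (k + 1) < x (k + 1) := by
  have hlin : Tendsto (fun k : ℕ => ((k : ℝ) + 1) / u ^ (k + 1)) atTop (𝓝 0) := by
    have := (tendsto_pow_const_div_const_pow_of_one_lt 1 hu).comp (tendsto_add_atTop_nat 1)
    simpa [Function.comp_def] using this
  have hlim := ((hx.comp (tendsto_add_atTop_nat 1)).sub (hx.const_mul (c / u))).sub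
    (hlin.const_mul C)
  have hpos : 0 < 1 - c / u * 1 - C * 0 := by
    rw [mul_one, mul_zero, sub_zero, sub_pos, div_lt_one (by linarith)]
    exact hc
  filter_upwards [hlim.eventually (lt_mem_nhds hpos)] with k hk
  have hu0 : u ≠ 0 := by positivity
  have hrw : x (k + 1) / u ^ (k + 1) - c / u * (x k / u ^ k) - C * ((k + 1) / u ^ (k + 1))
      = (x (k + 1) - (c * x k + C * (k + 1))) / u ^ (k + 1) := by
    field_simp
    ring
  simp only [Function.comp_apply] at hk
  rw [hrw] at hk
  have := (div_pos_iff_of_pos_right (by positivity)).mp hk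
  linarith

theorem exists_eq_pow_of_subseq {u v : ℕ} {a b idx : ℕ → ℕ} (hv : v ≠ 0) (huv : v < u)
    (ha : Tendsto (fun k => (a k : ℝ) / (u : ℝ) ^ k) atTop (𝓝 1))
    (hb : Tendsto (fun n => (b n : ℝ) / (v : ℝ) ^ n) atTop (𝓝 1))
    (hidx : StrictMono idx) (hba : ∀ k, b (idx k) = a k) :
    ∃ r, 2 ≤ r ∧ u = v ^ r := by
  have hequiv : (fun k => (u : ℝ) ^ k) ~[atTop] fun k => (v : ℝ) ^ idx k := by
    have hb' := (isEquivalent_of_tendsto_one hb).comp_tendsto hidx.tendsto_atTop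
    simp only [Function.comp_def, hba] at hb'
    exact (isEquivalent_of_tendsto_one ha).symm.trans hb'
  have hlim := tendsto_pow_sub_of_isEquivalent (by exact_mod_cast (Nat.zero_lt_of_lt huv).ne')
    (by exact_mod_cast hv)
    hidx.monotone hequiv
  norm_cast at hlim
  obtain ⟨k, hk⟩ := (eventually_eq_of_tendsto_natCast hlim).exists
  refine ⟨idx (k + 1) - idx k, ?_, hk.symm⟩
  by_contra! hr
  interval_cases h : idx (k + 1) - idx k <;> simp at hk <;> omega

def geomInterp (a : ℕ → ℕ) (v r n : ℕ) : ℕ := a (n / r) * v ^ (n % r)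

section geomInterp

variable {a : ℕ → ℕ} {v r : ℕ}

theorem geomInterp_mul_add {q s : ℕ} (hs : s < r) :
    geomInterp a v r (q * r + s) = a q * v ^ s := by
  have hr : 0 < r := by omega
  rw [geomInterp, mul_comm q, Nat.mul_add_div hr, Nat.div_eq_of_lt hs, add_zero,
    Nat.mul_add_mod_self_left, Nat.mod_eq_of_lt hs]

theorem geomInterp_mul (hr : 0 < r) (q : ℕ) : geomInterp a v r (q * r) = a q := by
  simpa using geomInterp_mul_add (a := a) (v := v) (q := q) hr

theorem geomInterp_lt_succ (hv : 1 < v) {q s : ℕ} (ha : 0 < a q)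
    (hstep : v ^ (r - 1) * a q < a (q + 1)) (hs : s < r) :
    geomInterp a v r (q * r + s) < geomInterp a v r (q * r + s + 1) := by
  rw [geomInterp_mul_add hs]
  rcases (show s + 1 ≤ r from hs).lt_or_eq with hs' | hs'
  · rw [add_assoc, geomInterp_mul_add hs']
    exact Nat.mul_lt_mul_of_pos_left (Nat.pow_lt_pow_right hv s.lt_succ_self) ha
  · rw [add_assoc, hs', ← Nat.succ_mul, geomInterp_mul (by omega), mul_comm]
    rwa [show s = r - 1 by omega]

theorem tendsto_geomInterp_div_pow (hv : v ≠ 0) (hr : 0 < r)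
    (ha : Tendsto (fun k => (a k : ℝ) / ((v : ℝ) ^ r) ^ k) atTop (𝓝 1)) :
    Tendsto (fun n => (geomInterp a v r n : ℝ) / (v : ℝ) ^ n) atTop (𝓝 1) := by
  refine (ha.comp (Nat.tendsto_div_const_atTop hr.ne')).congr fun n => ?_
  have hsplit : (v : ℝ) ^ n = ((v : ℝ) ^ r) ^ (n / r) * (v : ℝ) ^ (n % r) := by
    rw [← pow_mul, ← pow_add, Nat.div_add_mod]
  rw [Function.comp_apply, geomInterp, hsplit, Nat.cast_mul, Nat.cast_pow,
    mul_div_mul_right _ _ (pow_ne_zero _ (Nat.cast_ne_zero.mpr hv))]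

end geomInterp

/-- The padding `a N + 1, a N + 2, …` moves `a (N + 1)` to position `(N + 1) * r`, from where on
the sequence agrees with `geomInterp a v r`. -/
def spliceSeq (a : ℕ → ℕ) (v r N n : ℕ) : ℕ :=
  if n ≤ N then a n else if n < (N + 1) * r then a N + (n - N) else geomInterp a v r n

def spliceIdx (r N k : ℕ) : ℕ := if k ≤ N then k else k * r

section spliceSeq

variable {a : ℕ → ℕ} {v r N n : ℕ}

theorem spliceSeq_of_le (hn : n ≤ N) : spliceSeq a v r N n = a n := by
  simp [spliceSeq, hn]

theorem spliceSeq_of_le_of_lt (hn : N ≤ n) (hn' : n < (N + 1) * r) :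
    spliceSeq a v r N n = a N + (n - N) := by
  rcases hn.eq_or_lt with rfl | hn
  · simp [spliceSeq]
  · simp [spliceSeq, Nat.not_le.mpr hn, hn']

theorem spliceSeq_of_ge (hr : 0 < r) (hn : (N + 1) * r ≤ n) :
    spliceSeq a v r N n = geomInterp a v r n := by
  have : N < n := by nlinarith
  simp [spliceSeq, Nat.not_le.mpr this, Nat.not_lt.mpr hn]

theorem spliceSeq_strictMono (hr : 0 < r) (hv : 1 < v) (ha : StrictMono a)
    (hN : ∀ k ≥ N, v ^ (r - 1) * a k + (r - 1) * (k + 1) < a (k + 1)) :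
    StrictMono (spliceSeq a v r N) := by
  refine strictMono_nat_of_lt_succ fun n => ?_
  rcases lt_or_ge n N with hnN | hnN
  · rw [spliceSeq_of_le hnN.le, spliceSeq_of_le hnN]
    exact ha n.lt_succ_self
  rcases lt_or_ge n ((N + 1) * r) with hn | hn
  · rw [spliceSeq_of_le_of_lt hnN hn]
    rcases (show n + 1 ≤ (N + 1) * r from hn).lt_or_eq with hn1 | hn1
    · rw [spliceSeq_of_le_of_lt (by omega) hn1]
      omega
    · have hgap := hN N le_rfl
      have hle : a N ≤ v ^ (r - 1) * a N := Nat.le_mul_of_pos_left _ (by positivity)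
      rw [hn1, spliceSeq_of_ge hr le_rfl, geomInterp_mul hr]
      have hpad : n - N = (r - 1) * (N + 1) := by
        rw [Nat.sub_one_mul, mul_comm]
        omega
      omega
  · obtain ⟨q, s, hs, rfl⟩ : ∃ q s, s < r ∧ n = q * r + s :=
      ⟨n / r, n % r, Nat.mod_lt _ hr, (Nat.div_add_mod' n r).symm⟩
    have hq : N + 1 ≤ q := by
      by_contra! hq
      nlinarith
    rw [spliceSeq_of_ge hr hn, spliceSeq_of_ge hr (by omega)]
    refine geomInterp_lt_succ hv ((Nat.zero_le _).trans_lt (ha (by omega : 0 < q))) ?_ hs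
    exact (Nat.le_add_right _ _).trans_lt (hN q (by omega))

theorem spliceSeq_pos (hv : 0 < v) (ha : ∀ k, 0 < a k) (n : ℕ) : 0 < spliceSeq a v r N n := by
  unfold spliceSeq geomInterp
  split_ifs
  · exact ha n
  · exact Nat.add_pos_left (ha N) _
  · exact Nat.mul_pos (ha _) (Nat.pow_pos hv)

theorem spliceIdx_strictMono (hr : 0 < r) : StrictMono (spliceIdx r N) := by
  refine strictMono_nat_of_lt_succ fun k => ?_
  unfold spliceIdx
  split_ifs <;> nlinarith

theorem spliceSeq_spliceIdx (hr : 0 < r) (k : ℕ) : spliceSeq a v r N (spliceIdx r N k) = a k := by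
  unfold spliceIdx
  split_ifs with hk
  · exact spliceSeq_of_le hk
  · rw [spliceSeq_of_ge hr (Nat.mul_le_mul_right r (by omega)), geomInterp_mul hr]

end spliceSeq

theorem exists_supersequence_of_eq_pow {v r : ℕ} {a : ℕ → ℕ} (hv : 1 < v) (hr : 0 < r)
    (hmono : StrictMono a) (hpos : ∀ k, 0 < a k)
    (ha : Tendsto (fun k => (a k : ℝ) / ((v ^ r : ℕ) : ℝ) ^ k) atTop (𝓝 1)) :
    ∃ b : ℕ → ℕ, StrictMono b ∧ (∀ n, 0 < b n) ∧
      Tendsto (fun n => (b n : ℝ) / (v : ℝ) ^ n) atTop (𝓝 1) ∧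
      ∃ idx : ℕ → ℕ, StrictMono idx ∧ ∀ k, b (idx k) = a k := by
  have hgrowth : ∀ᶠ k in atTop, v ^ (r - 1) * a k + (r - 1) * (k + 1) < a (k + 1) := by
    have hu : (1 : ℝ) < ((v ^ r : ℕ) : ℝ) := by exact_mod_cast Nat.one_lt_pow hr.ne' hv
    have hc : ((v ^ (r - 1) : ℕ) : ℝ) < ((v ^ r : ℕ) : ℝ) := by
      exact_mod_cast Nat.pow_lt_pow_right hv (Nat.sub_lt hr one_pos)
    filter_upwards [eventually_mul_add_lt_of_tendsto_div_pow (C := ((r - 1 : ℕ) : ℝ)) hu hc ha]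
      with k hk
    exact_mod_cast hk
  obtain ⟨N, hN⟩ := eventually_atTop.mp hgrowth
  refine ⟨spliceSeq a v r N, spliceSeq_strictMono hr hv hmono hN, spliceSeq_pos (by omega) hpos,
    ?_, spliceIdx r N, spliceIdx_strictMono hr, spliceSeq_spliceIdx hr⟩
  refine (tendsto_geomInterp_div_pow (v := v) (by omega) hr (by simpa using ha)).congr' ?_
  filter_upwards [eventually_ge_atTop ((N + 1) * r)] with n hn
  rw [spliceSeq_of_ge hr hn]

/-- For integers `u > v ≥ 2`: a strictly increasing sequence `A ~ u^k` admits a strictly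
increasing supersequence `B ~ v^n` (for some `A`, equivalently for every such `A`) if
and only if `u = v^r` for some `r ≥ 2`. -/
theorem stmt14 (u v : ℕ) (hv : 2 ≤ v) (huv : v < u) :
    ((∃ a : ℕ → ℕ, StrictMono a ∧ (∀ k, 0 < a k) ∧
        Filter.Tendsto (fun k : ℕ => (a k : ℝ) / (u : ℝ) ^ k) Filter.atTop (nhds 1) ∧
        ∃ b : ℕ → ℕ, StrictMono b ∧ (∀ n, 0 < b n) ∧
          Filter.Tendsto (fun n : ℕ => (b n : ℝ) / (v : ℝ) ^ n) Filter.atTop (nhds 1) ∧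
          ∃ idx : ℕ → ℕ, StrictMono idx ∧ ∀ k, b (idx k) = a k) ↔
      ∃ r : ℕ, 2 ≤ r ∧ u = v ^ r) ∧
    ((∀ a : ℕ → ℕ, StrictMono a → (∀ k, 0 < a k) →
        Filter.Tendsto (fun k : ℕ => (a k : ℝ) / (u : ℝ) ^ k) Filter.atTop (nhds 1) →
        ∃ b : ℕ → ℕ, StrictMono b ∧ (∀ n, 0 < b n) ∧
          Filter.Tendsto (fun n : ℕ => (b n : ℝ) / (v : ℝ) ^ n) Filter.atTop (nhds 1) ∧
          ∃ idx : ℕ → ℕ, StrictMono idx ∧ ∀ k, b (idx k) = a k) ↔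
      ∃ r : ℕ, 2 ≤ r ∧ u = v ^ r) := by
  have hmono : StrictMono (u ^ ·) := pow_right_strictMono₀ (by omega)
  have hpos : ∀ k, 0 < u ^ k := fun k => Nat.pow_pos (by omega)
  have hlim : Tendsto (fun k => ((u ^ k : ℕ) : ℝ) / (u : ℝ) ^ k) atTop (𝓝 1) := by
    have hu : (u : ℝ) ≠ 0 := by exact_mod_cast (Nat.zero_lt_of_lt huv).ne'
    exact tendsto_const_nhds.congr fun k => by rw [Nat.cast_pow, div_self (pow_ne_zero k hu)]
  refine ⟨⟨?_, ?_⟩, ⟨?_, ?_⟩⟩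
  · rintro ⟨a, -, -, ha, b, -, -, hb, idx, hidx, hba⟩
    exact exists_eq_pow_of_subseq (by omega) huv ha hb hidx hba
  · rintro ⟨r, hr, rfl⟩
    exact ⟨_, hmono, hpos, hlim, exists_supersequence_of_eq_pow hv (by omega) hmono hpos hlim⟩
  · intro h
    obtain ⟨b, -, -, hb, idx, hidx, hba⟩ := h _ hmono hpos hlim
    exact exists_eq_pow_of_subseq (by omega) huv hlim hb hidx hba
  · rintro ⟨r, hr, rfl⟩ a hmono hpos ha
    exact exists_supersequence_of_eq_pow hv (by omega) hmono hpos ha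
end

section
/- Let g be a growth function for which there is a strictly increasing sequence of positive integers {m_k} with liminf_k g(m_k+1/2)/g(m_k) > 1 and liminf_k g(m_k+1)/g(m_k+1/2) > 1. Then there exists a growth function f with f(x) > g(x) for all x ≥ 1 and a strictly increasing sequence A of positive integers with a_k ~ f(k), such that no strictly increasing sequence B of positive integers with b_n ~ g(n) contains A as a subsequence. -/
open Filter Set Topology Asymptotics

noncomputable def linearInterp (A : ℕ → ℝ) (x : ℝ) : ℝ :=
  A ⌊x⌋₊ + (x - ⌊x⌋₊) * (A (⌊x⌋₊ + 1) - A ⌊x⌋₊)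

section linearInterp

variable (A : ℕ → ℝ)

@[simp]
lemma linearInterp_natCast (n : ℕ) : linearInterp A n = A n := by
  simp [linearInterp]

lemma linearInterp_eq_of_mem_Icc {n : ℕ} {x : ℝ} (hx : x ∈ Icc (n : ℝ) (n + 1)) :
    linearInterp A x = A n + (x - n) * (A (n + 1) - A n) := by
  rcases hx.2.eq_or_lt with rfl | hlt
  · simpa using linearInterp_natCast A (n + 1)
  · rw [linearInterp, (Nat.floor_eq_iff ((Nat.cast_nonneg n).trans hx.1)).mpr ⟨hx.1, hlt⟩]

lemma locallyFinite_Icc_natCast_add_one : LocallyFinite fun n : ℕ => Icc (n : ℝ) (n + 1) := by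
  intro x
  refine ⟨Iio (x + 1), Iio_mem_nhds (lt_add_one x), (finite_Iio (⌈x⌉₊ + 1)).subset ?_⟩
  rintro n ⟨y, hy, hyx⟩
  have : (n : ℝ) < ⌈x⌉₊ + 1 := by linarith [hy.1, Nat.le_ceil x, hyx.out]
  exact_mod_cast this

lemma linearInterp_continuousOn : ContinuousOn (linearInterp A) (Ici 0) := by
  have hcover : Ici (0 : ℝ) ⊆ ⋃ n : ℕ, Icc (n : ℝ) (n + 1) := fun x hx =>
    mem_iUnion.mpr ⟨⌊x⌋₊, Nat.floor_le hx, (Nat.lt_floor_add_one x).le⟩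
  refine (locallyFinite_Icc_natCast_add_one.continuousOn_iUnion (fun _ => isClosed_Icc)
    fun n => ?_).mono hcover
  exact (by fun_prop : Continuous fun x : ℝ => A n + (x - n) * (A (n + 1) - A n))
    |>.continuousOn.congr fun x hx => linearInterp_eq_of_mem_Icc A hx

variable {A}

lemma le_linearInterp (hA : Monotone A) {x : ℝ} (hx : 0 ≤ x) : A ⌊x⌋₊ ≤ linearInterp A x :=
  le_add_of_nonneg_right <| mul_nonneg (sub_nonneg.mpr (Nat.floor_le hx))
    (sub_nonneg.mpr (hA (Nat.le_succ _)))

lemma linearInterp_lt (hA : StrictMono A) (x : ℝ) : linearInterp A x < A (⌊x⌋₊ + 1) := by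
  have h : x - ⌊x⌋₊ < 1 := by linarith [Nat.lt_floor_add_one x]
  have hstep : 0 < A (⌊x⌋₊ + 1) - A ⌊x⌋₊ := sub_pos.mpr (hA (Nat.lt_succ_self _))
  have := mul_lt_mul_of_pos_right h hstep
  rw [linearInterp]
  linarith

lemma linearInterp_strictMonoOn (hA : StrictMono A) : StrictMonoOn (linearInterp A) (Ici 0) := by
  intro x _ y hy hxy
  rcases (Nat.floor_le_floor hxy.le).eq_or_lt with hfloor | hfloor
  · have hstep : 0 < A (⌊x⌋₊ + 1) - A ⌊x⌋₊ := sub_pos.mpr (hA (Nat.lt_succ_self _))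
    have := mul_lt_mul_of_pos_right (sub_lt_sub_right hxy (⌊x⌋₊ : ℝ)) hstep
    rw [linearInterp, linearInterp, ← hfloor]
    linarith
  · calc linearInterp A x < A (⌊x⌋₊ + 1) := linearInterp_lt hA x
      _ ≤ A ⌊y⌋₊ := hA.monotone hfloor
      _ ≤ linearInterp A y := le_linearInterp hA.monotone hy

lemma linearInterp_tendsto_atTop (hA : Monotone A) (htop : Tendsto A atTop atTop) :
    Tendsto (linearInterp A) atTop atTop :=
  tendsto_atTop_mono' atTop ((eventually_ge_atTop 0).mono fun _ hx => le_linearInterp hA hx)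
    (htop.comp tendsto_nat_floor_atTop)

lemma linearInterp_isGrowthFun (hA : StrictMono A) (hpos : 0 < A 0)
    (htop : Tendsto A atTop atTop) : IsGrowthFun (linearInterp A) :=
  ⟨fun x hx => (hpos.trans_le (hA.monotone (Nat.zero_le _))).trans_le
      (le_linearInterp hA.monotone (by linarith)),
    (linearInterp_strictMonoOn hA).mono (Ici_subset_Ici.mpr zero_le_one),
    (linearInterp_continuousOn A).mono (Ici_subset_Ici.mpr zero_le_one),
    linearInterp_tendsto_atTop hA.monotone htop⟩

end linearInterp

lemma isBigO_pow_of_eventually_mul_le {u : ℕ → ℝ} {c : ℝ} (hc : 0 ≤ c)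
    (hu : ∀ᶠ k in atTop, 0 < u k ∧ c * u k ≤ u (k + 1)) :
    (fun k => c ^ k) =O[atTop] u := by
  obtain ⟨K, hK⟩ := hu.exists_forall_of_atTop
  have hgeom : ∀ n ≥ K, c ^ n * u K ≤ c ^ K * u n := by
    refine Nat.le_induction (by rw [mul_comm]) fun n hn ih => ?_
    calc c ^ (n + 1) * u K = c * (c ^ n * u K) := by ring
      _ ≤ c * (c ^ K * u n) := by gcongr
      _ = c ^ K * (c * u n) := by ring
      _ ≤ c ^ K * u (n + 1) := by gcongr; exact (hK n hn).2
  refine IsBigO.of_bound (c ^ K / u K) (eventually_atTop.mpr ⟨K, fun n hn => ?_⟩)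
  rw [Real.norm_of_nonneg (pow_nonneg hc n), Real.norm_of_nonneg (hK n hn).1.le, div_mul_eq_mul_div,
    le_div_iff₀ (hK K le_rfl).1]
  exact hgeom n hn

lemma natCast_isLittleO_of_eventually_mul_le {u : ℕ → ℝ} {c : ℝ} (hc : 1 < c)
    (hpos : ∀ᶠ k in atTop, 0 < u k) (hu : ∀ᶠ k in atTop, c * u k ≤ u (k + 1)) :
    (fun k : ℕ => (k : ℝ)) =o[atTop] u := by
  simpa using (isLittleO_pow_const_const_pow_of_one_lt 1 hc).trans_isBigO
    (isBigO_pow_of_eventually_mul_le (by linarith) (hpos.and hu))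

noncomputable def natAbove (G : ℕ → ℝ) (k : ℕ) : ℕ := ⌊G k⌋₊ + k + 1

section natAbove

variable {G : ℕ → ℝ}

lemma natAbove_pos (k : ℕ) : 0 < natAbove G k := Nat.succ_pos _

lemma natAbove_strictMono (hG : Monotone G) : StrictMono (natAbove G) :=
  strictMono_nat_of_lt_succ fun k => by
    have : ⌊G k⌋₊ ≤ ⌊G (k + 1)⌋₊ := Nat.floor_le_floor (hG (Nat.le_succ k))
    simp only [natAbove]
    omega

lemma lt_natAbove (k : ℕ) : G k < natAbove G k := by
  rw [natAbove, Nat.cast_add_one, Nat.cast_add]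
  linarith [Nat.lt_floor_add_one (G k), (Nat.cast_nonneg k : (0 : ℝ) ≤ k)]

lemma natAbove_le {k : ℕ} (hk : 0 ≤ G k) : (natAbove G k : ℝ) ≤ G k + k + 1 := by
  rw [natAbove, Nat.cast_add_one, Nat.cast_add]
  linarith [Nat.floor_le hk]

lemma natAbove_isEquivalent (hG : ∀ k, 0 ≤ G k) (ho : (fun k : ℕ => (k : ℝ)) =o[atTop] G) :
    (fun k => (natAbove G k : ℝ)) ~[atTop] G := by
  refine IsBigO.trans_isLittleO (IsBigO.of_bound 2 ?_) ho
  filter_upwards [eventually_ge_atTop 1] with k hk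
  have hk' : (1 : ℝ) ≤ k := by exact_mod_cast hk
  rw [Pi.sub_apply, Real.norm_of_nonneg (sub_nonneg.mpr (lt_natAbove k).le),
    Real.norm_of_nonneg (Nat.cast_nonneg k)]
  linarith [natAbove_le (hG k)]

end natAbove

lemma exists_one_lt_eventually_mul_le {x y : ℕ → ℝ} (hx : ∀ k, 0 ≤ x k) (hy : ∀ k, 0 < y k)
    (h : 1 < liminf (fun k => x k / y k) atTop) :
    ∃ c > 1, ∀ᶠ k in atTop, c * y k ≤ x k := by
  obtain ⟨c, hc1, hc⟩ := exists_between h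
  refine ⟨c, hc1, (eventually_lt_of_lt_liminf hc ?_).mono fun k hk => ?_⟩
  · exact isBoundedUnder_of ⟨0, fun k => div_nonneg (hx k) (hy k).le⟩
  · exact (le_div_iff₀ (hy k)).mp hk.le

lemma exists_one_lt_eventually_gap {g : ℝ → ℝ} (hgpos : ∀ x ≥ (1 : ℝ), 0 < g x) {m : ℕ → ℕ}
    (hm : ∀ k, 0 < m k)
    (h₁ : 1 < liminf (fun k => g ((m k : ℝ) + 1 / 2) / g (m k)) atTop)
    (h₂ : 1 < liminf (fun k => g ((m k : ℝ) + 1) / g ((m k : ℝ) + 1 / 2)) atTop) :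
    ∃ c > 1, ∀ᶠ k in atTop,
      c * g (m k) ≤ g ((m k : ℝ) + 1 / 2) ∧ c * g ((m k : ℝ) + 1 / 2) ≤ g ((m k : ℝ) + 1) := by
  have hm' : ∀ k, (1 : ℝ) ≤ m k := fun k => by exact_mod_cast hm k
  have hpos : ∀ t ≥ (0 : ℝ), ∀ k, 0 < g ((m k : ℝ) + t) := fun t ht k =>
    hgpos _ (by linarith [hm' k])
  obtain ⟨c₁, hc₁, hgap₁⟩ := exists_one_lt_eventually_mul_le
    (fun k => (hpos _ (by norm_num) k).le) (fun k => hgpos _ (hm' k)) h₁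
  obtain ⟨c₂, hc₂, hgap₂⟩ := exists_one_lt_eventually_mul_le
    (fun k => (hpos _ zero_le_one k).le) (hpos _ (by norm_num)) h₂
  refine ⟨min c₁ c₂, lt_min hc₁ hc₂, (hgap₁.and hgap₂).mono fun k hk => ⟨?_, ?_⟩⟩
  · exact (mul_le_mul_of_nonneg_right (min_le_left _ _) (hgpos _ (hm' k)).le).trans hk.1
  · exact (mul_le_mul_of_nonneg_right (min_le_right _ _) (hpos _ (by norm_num) k).le).trans hk.2

lemma not_isEquivalent_of_gap {g : ℝ → ℝ} (hg : MonotoneOn g (Ici 1))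
    (hgpos : ∀ x ≥ (1 : ℝ), 0 < g x) {m : ℕ → ℕ} (hm : ∀ k, 0 < m k) {y : ℕ → ℝ} {c : ℝ}
    (hc : 1 < c) (hgap : ∀ᶠ k in atTop, c * g (m k) ≤ y k ∧ c * y k ≤ g (m k + 1))
    {n : ℕ → ℕ} (hn : Tendsto n atTop atTop) :
    ¬ y ~[atTop] fun k => g (n k) := by
  intro hequiv
  have hn1 : ∀ᶠ k in atTop, (1 : ℝ) ≤ n k :=
    (hn.eventually_ge_atTop 1).mono fun k hk => by exact_mod_cast hk
  have hratio : Tendsto (fun k => y k / g (n k)) atTop (𝓝 1) :=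
    (isEquivalent_iff_tendsto_one (hn1.mono fun k hk => (hgpos _ hk).ne')).mp hequiv
  obtain ⟨k, ⟨hlow, hhigh⟩, hnk, hkc⟩ := (hgap.and (hn1.and
    (hratio.eventually (Ioo_mem_nhds (inv_lt_one_of_one_lt₀ hc) hc)))).exists
  have hm1 : (1 : ℝ) ≤ m k := by exact_mod_cast hm k
  have hgn := hgpos _ hnk
  have hupper : y k < c * g (n k) := (div_lt_iff₀ hgn).mp hkc.2
  have hlower : g (n k) < c * y k := calc
    g (n k) = c * (c⁻¹ * g (n k)) := by field_simp
    _ < c * y k := by gcongr; exact (lt_div_iff₀ hgn).mp hkc.1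
  rcases le_or_gt (n k) (m k) with hle | hlt
  · have : g (n k) ≤ g (m k) := hg hnk hm1 (by exact_mod_cast hle)
    linarith [mul_le_mul_of_nonneg_left this (by linarith : 0 ≤ c)]
  · have : g (m k + 1) ≤ g (n k) := hg (by simp) hnk (by exact_mod_cast hlt)
    linarith

lemma lt_apply_floor {m : ℕ → ℕ} (hm : StrictMono m) (h0 : 0 < m 0) (x : ℝ) :
    x < m ⌊x⌋₊ := by
  have : ⌊x⌋₊ + 1 ≤ m ⌊x⌋₊ := by
    have := hm.add_le_nat ⌊x⌋₊ 0
    simp only [Nat.add_zero] at this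
    omega
  calc x < ⌊x⌋₊ + 1 := Nat.lt_floor_add_one x
    _ ≤ m ⌊x⌋₊ := by exact_mod_cast this

/-- If `g` is a growth function with jumps along a strictly increasing sequence of
positive integers `m_k`, then there is a growth function `f > g` and a strictly
increasing sequence `A ~ f` of positive integers with no supersequence `B ~ g`. -/
theorem stmt16 (g : ℝ → ℝ) (hg : IsGrowthFun g)
    (m : ℕ → ℕ) (hm : StrictMono m) (hmpos : ∀ k, 0 < m k)
    (hm1 : 1 < Filter.liminf
      (fun k : ℕ => g ((m k : ℝ) + 1 / 2) / g (m k)) Filter.atTop)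
    (hm2 : 1 < Filter.liminf
      (fun k : ℕ => g ((m k : ℝ) + 1) / g ((m k : ℝ) + 1 / 2)) Filter.atTop) :
    ∃ f : ℝ → ℝ, IsGrowthFun f ∧ (∀ x ≥ (1 : ℝ), g x < f x) ∧
      ∃ a : ℕ → ℕ, StrictMono a ∧ (∀ k, 0 < a k) ∧
        Filter.Tendsto (fun k : ℕ => (a k : ℝ) / f k) Filter.atTop (nhds 1) ∧
        ¬ ∃ b : ℕ → ℕ, StrictMono b ∧ (∀ n, 0 < b n) ∧
          Filter.Tendsto (fun n : ℕ => (b n : ℝ) / g n) Filter.atTop (nhds 1) ∧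
          ∃ idx : ℕ → ℕ, StrictMono idx ∧ ∀ k, b (idx k) = a k := by
  obtain ⟨hgpos, hgmono, -, -⟩ := hg
  replace hgmono := hgmono.monotoneOn
  have hIci : ∀ {x : ℝ} (k : ℕ), (m k : ℝ) ≤ x → x ∈ Ici 1 := fun k h =>
    le_trans (by exact_mod_cast hmpos k) h
  set G : ℕ → ℝ := fun k => g ((m k : ℝ) + 1 / 2)
  have hGpos : ∀ k, 0 < G k := fun k => hgpos _ (hIci k (by linarith))
  have hGmono : Monotone G := fun i j hij =>
    hgmono (hIci i (by linarith)) (hIci j (by linarith)) (by gcongr; exact hm.monotone hij)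
  obtain ⟨c, hc, hgap⟩ := exists_one_lt_eventually_gap hgpos hmpos hm1 hm2
  have hgrowth : ∀ᶠ k in atTop, c * G k ≤ G (k + 1) := hgap.mono fun k hk =>
    hk.2.trans <| hgmono (hIci k (by linarith)) (hIci (k + 1) (by linarith)) <| by
      have : (m k : ℝ) + 1 ≤ m (k + 1) := by exact_mod_cast hm (Nat.lt_succ_self k)
      linarith
  have ha : (fun k => (natAbove G k : ℝ)) ~[atTop] G := natAbove_isEquivalent
    (fun k => (hGpos k).le) (natCast_isLittleO_of_eventually_mul_le hc (.of_forall hGpos) hgrowth)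
  have haMono := natAbove_strictMono hGmono
  refine ⟨linearInterp fun k => natAbove G k, linearInterp_isGrowthFun
    (Nat.strictMono_cast.comp haMono) (by exact_mod_cast natAbove_pos 0)
    (tendsto_natCast_atTop_atTop.comp haMono.tendsto_atTop), fun x hx => ?_,
    natAbove G, haMono, natAbove_pos, ?_, ?_⟩
  · have hxm := lt_apply_floor hm (hmpos 0) x
    calc g x ≤ G ⌊x⌋₊ := hgmono hx (hIci ⌊x⌋₊ (by linarith)) (by linarith)
      _ < natAbove G ⌊x⌋₊ := lt_natAbove _
      _ ≤ _ := le_linearInterp (Nat.mono_cast.comp haMono.monotone) (by linarith)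
  · simp [div_self, (natAbove_pos _).ne']
  · rintro ⟨b, -, -, hb, idx, hidx, hba⟩
    refine not_isEquivalent_of_gap hgmono hgpos hmpos hc hgap hidx.tendsto_atTop
      (ha.symm.trans ?_)
    simpa [Function.comp_def, hba] using
      (isEquivalent_of_tendsto_one hb).comp_tendsto hidx.tendsto_atTop
end

section
/- Let h ≥ 2. If α > 0 is an additive eigenvalue of order h and 0 < β < α, then β is also an additive eigenvalue of order h. -/
/-!
Enlarge `A` greedily to a set `B ⊇ A`, which is then still an asymptotic basis: walking
upward, `b (n + 1)` is the next element of `A` if that is at most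
`max (b n + 1) ⌈β (n + 1) ^ h⌉`, and this bound otherwise. For `h ≥ 2` consecutive targets
`⌈β n ^ h⌉` eventually differ by at least `2`, so the excess of `b n` over its target dies out
and `b n ≤ ⌈β n ^ h⌉` eventually.

For the lower bound let `a (j n) ≤ b n < a (j n + 1)` and `θ = (β / α) ^ (1 / h) < 1`. At
every step where `b n` reaches its target, `α (j n + 1) ^ h ≳ a (j n + 1) > β n ^ h` gives
`j n + 1 ≳ θ n`; at every other step `b n` is an element of `A`, so `j` grows by `1 > θ`.
Hence `j n ≳ θ n` throughout, and `b n ≥ a (j n) ≳ α θ ^ h n ^ h = β n ^ h`.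
-/

/-- `α` is an additive eigenvalue of order `h`: there is a strictly increasing sequence
of nonnegative integers forming an asymptotic basis of order `h` with `a_n ~ α n^h`. -/
def IsAdditiveEigenvalue (h : ℕ) (α : ℝ) : Prop :=
  ∃ a : ℕ → ℕ, StrictMono a ∧
    (∃ n₀ : ℕ, ∀ n : ℕ, n₀ ≤ n →
      ∃ c : Fin h → ℕ, (∀ i, c i ∈ Set.range a) ∧ ∑ i, c i = n) ∧
    Filter.Tendsto (fun n : ℕ => (a n : ℝ) / (α * (n : ℝ) ^ h)) Filter.atTop (nhds 1)

open Filter Topology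

def fillAux (a T : ℕ → ℕ) : ℕ → ℕ × ℕ
  | 0 => (a 0, 0)
  | n + 1 =>
    let (b, j) := fillAux a T n
    let v := min (a (j + 1)) (max (b + 1) (T (n + 1)))
    (v, if v = a (j + 1) then j + 1 else j)

def fill (a T : ℕ → ℕ) (n : ℕ) : ℕ := (fillAux a T n).1

def fillIndex (a T : ℕ → ℕ) (n : ℕ) : ℕ := (fillAux a T n).2

section

variable {a T : ℕ → ℕ}

lemma fill_succ (n : ℕ) :
    fill a T (n + 1) = min (a (fillIndex a T n + 1)) (max (fill a T n + 1) (T (n + 1))) := rfl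

lemma fillIndex_succ (n : ℕ) :
    fillIndex a T (n + 1) =
      if fill a T (n + 1) = a (fillIndex a T n + 1) then fillIndex a T n + 1
      else fillIndex a T n := rfl

lemma fill_succ_le_apply (n : ℕ) : fill a T (n + 1) ≤ a (fillIndex a T n + 1) :=
  min_le_left _ _

lemma fill_succ_le_max (n : ℕ) : fill a T (n + 1) ≤ max (fill a T n + 1) (T (n + 1)) :=
  min_le_right _ _

lemma fill_mem_Ico (ha : StrictMono a) (n : ℕ) :
    fill a T n ∈ Set.Ico (a (fillIndex a T n)) (a (fillIndex a T n + 1)) := by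
  induction n with
  | zero => exact ⟨le_rfl, ha Nat.zero_lt_one⟩
  | succ n ih =>
    by_cases hv : fill a T (n + 1) = a (fillIndex a T n + 1)
    · rw [fillIndex_succ, if_pos hv, hv]
      exact ⟨le_rfl, ha (Nat.lt_succ_self _)⟩
    · have hlt : fill a T n < fill a T (n + 1) :=
        lt_min ih.2 (lt_max_of_lt_left (Nat.lt_succ_self _))
      rw [fillIndex_succ, if_neg hv]
      exact ⟨ih.1.trans hlt.le, (fill_succ_le_apply n).lt_of_ne hv⟩

lemma fill_strictMono (ha : StrictMono a) : StrictMono (fill a T) :=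
  strictMono_nat_of_lt_succ fun n =>
    lt_min (fill_mem_Ico ha n).2 (lt_max_of_lt_left (Nat.lt_succ_self _))

lemma fillIndex_succ_of_fill_lt (n : ℕ) (hlt : fill a T (n + 1) < T (n + 1)) :
    fillIndex a T (n + 1) = fillIndex a T n + 1 := by
  have hv : fill a T (n + 1) = a (fillIndex a T n + 1) := by
    rw [fill_succ] at hlt ⊢
    refine min_eq_left (le_of_not_gt fun h => ?_)
    rw [min_eq_right h.le] at hlt
    exact (le_max_right _ _).not_gt hlt
  rw [fillIndex_succ, if_pos hv]

lemma range_subset_range_fill (ha : StrictMono a) : Set.range a ⊆ Set.range (fill a T) := by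
  suffices key : ∀ n k, a k ≤ fill a T n → a k ∈ Set.range (fill a T) by
    rintro _ ⟨k, rfl⟩
    exact key (a k) k ((fill_strictMono ha).id_le (a k))
  intro n
  induction n with
  | zero =>
    intro k hk
    obtain rfl : k = 0 := Nat.le_zero.mp (ha.le_iff_le.mp hk)
    exact ⟨0, rfl⟩
  | succ n ih =>
    intro k hk
    rcases le_or_gt (a k) (fill a T n) with hle | hlt
    · exact ih k hle
    · have hj : fillIndex a T n < k := ha.lt_iff_lt.mp ((fill_mem_Ico ha n).1.trans_lt hlt)
      exact ⟨n + 1, le_antisymm ((fill_succ_le_apply n).trans (ha.monotone hj)) hk⟩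

lemma eventually_fill_le (hT : ∀ᶠ n in atTop, T n + 2 ≤ T (n + 1)) :
    ∀ᶠ n in atTop, fill a T n ≤ T n := by
  obtain ⟨N, hN⟩ := eventually_atTop.mp hT
  have hexcess : ∀ k, fill a T (N + k) ≤ T (N + k) + (fill a T N - k) := by
    intro k
    induction k with
    | zero => simp
    | succ k ih =>
      have := fill_succ_le_max (a := a) (T := T) (N + k)
      have := hN (N + k) (Nat.le_add_right N k)
      rw [← add_assoc]
      omega
  filter_upwards [eventually_ge_atTop (N + fill a T N)] with n hn
  obtain ⟨k, rfl⟩ := Nat.exists_eq_add_of_le (le_of_add_le_left hn)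
  have := hexcess k
  omega

end

lemma pow_add_two_mul_le_succ_pow {h : ℕ} (hh : 2 ≤ h) (n : ℕ) :
    n ^ h + 2 * n ≤ (n + 1) ^ h := by
  induction h, hh using Nat.le_induction with
  | base => nlinarith
  | succ h _ ih =>
    calc n ^ (h + 1) + 2 * n ≤ (n ^ h + 2 * n) * (n + 1) := by
          rw [pow_succ]; nlinarith [Nat.zero_le (n ^ h)]
      _ ≤ (n + 1) ^ h * (n + 1) := Nat.mul_le_mul_right _ ih
      _ = (n + 1) ^ (h + 1) := (pow_succ _ _).symm

noncomputable def ceilPow (β : ℝ) (h n : ℕ) : ℕ := ⌈β * (n : ℝ) ^ h⌉₊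

section

variable {h : ℕ} {α β c ρ ρ' : ℝ} {f : ℕ → ℝ} {a : ℕ → ℕ}

lemma eventually_ceilPow_add_two_le (hh : 2 ≤ h) (hβ : 0 < β) :
    ∀ᶠ n : ℕ in atTop, ceilPow β h n + 2 ≤ ceilPow β h (n + 1) := by
  filter_upwards [(tendsto_natCast_atTop_atTop.const_mul_atTop hβ).eventually_ge_atTop 1]
    with n hn
  have hpow : ((n : ℝ) ^ h + 2 * n) ≤ ((n + 1 : ℕ) : ℝ) ^ h := by
    exact_mod_cast pow_add_two_mul_le_succ_pow hh n
  rw [ceilPow, ceilPow, ← Nat.ceil_add_ofNat (by positivity)]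
  exact Nat.ceil_mono (by nlinarith)

lemma eventually_mul_pow_lt (hα : 0 < α)
    (hf : Tendsto (fun k : ℕ => f k / (α * (k : ℝ) ^ h)) atTop (𝓝 1)) (hc : c < α) :
    ∀ᶠ k : ℕ in atTop, c * (k : ℝ) ^ h < f k := by
  filter_upwards [hf.eventually (lt_mem_nhds ((div_lt_one hα).mpr hc)),
    eventually_ge_atTop 1] with k hk hk1
  have hpos : 0 < α * (k : ℝ) ^ h := by positivity
  rw [lt_div_iff₀ hpos] at hk
  calc c * (k : ℝ) ^ h = c / α * (α * (k : ℝ) ^ h) := by field_simp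
    _ < f k := hk

lemma eventually_lt_mul_pow (hα : 0 < α)
    (hf : Tendsto (fun k : ℕ => f k / (α * (k : ℝ) ^ h)) atTop (𝓝 1)) (hc : α < c) :
    ∀ᶠ k : ℕ in atTop, f k < c * (k : ℝ) ^ h := by
  filter_upwards [hf.eventually (gt_mem_nhds ((one_lt_div hα).mpr hc)),
    eventually_ge_atTop 1] with k hk hk1
  have hpos : 0 < α * (k : ℝ) ^ h := by positivity
  rw [div_lt_iff₀ hpos] at hk
  calc f k < c / α * (α * (k : ℝ) ^ h) := hk
    _ = c * (k : ℝ) ^ h := by field_simp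

lemma min_zero_le_of_pos_or_le {g : ℕ → ℝ} {N : ℕ}
    (hg : ∀ n ≥ N, 0 < g (n + 1) ∨ g n ≤ g (n + 1)) {n : ℕ} (hn : N ≤ n) :
    min 0 (g N) ≤ g n := by
  induction n, hn using Nat.le_induction with
  | base => exact min_le_right _ _
  | succ n hn ih =>
    rcases hg n hn with hpos | hle
    · exact (min_le_left _ _).trans hpos.le
    · exact ih.trans hle

lemma eventually_mul_lt_fillIndex_add_one (ha : StrictMono a) (hα : 0 < α)
    (hlim : Tendsto (fun k : ℕ => (a k : ℝ) / (α * (k : ℝ) ^ h)) atTop (𝓝 1))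
    (hρ : 0 < ρ) (hρβ : α * ρ ^ h < β) :
    ∀ᶠ m in atTop, ceilPow β h m ≤ fill a (ceilPow β h) m →
      ρ * m < fillIndex a (ceilPow β h) m + 1 := by
  have hρh : 0 < ρ ^ h := pow_pos hρ h
  have hβ : 0 < β := (by positivity : 0 < α * ρ ^ h).trans hρβ
  obtain ⟨K, hK⟩ := eventually_atTop.mp
    (eventually_lt_mul_pow hα hlim ((lt_div_iff₀ hρh).mpr (by linarith)))
  filter_upwards [eventually_ge_atTop (a K)] with m hm hcaught
  set k := fillIndex a (ceilPow β h) m + 1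
  have hbk : fill a (ceilPow β h) m < a k := (fill_mem_Ico ha m).2
  have hKk : K ≤ k := ha.le_iff_le.mp (hm.trans ((fill_strictMono ha).id_le m) |>.trans hbk.le)
  have hlow : β * (m : ℝ) ^ h < a k :=
    ((Nat.le_ceil _).trans (Nat.cast_le.mpr hcaught)).trans_lt (Nat.cast_lt.mpr hbk)
  have hup : (a k : ℝ) < β / ρ ^ h * (k : ℝ) ^ h := hK k hKk
  have hpow : (ρ * m) ^ h < (k : ℝ) ^ h := by
    rw [div_mul_eq_mul_div, lt_div_iff₀ hρh] at hup
    rw [mul_pow]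
    nlinarith
  exact_mod_cast lt_of_pow_lt_pow_left₀ h (Nat.cast_nonneg k) hpow

lemma eventually_mul_le_fillIndex (ha : StrictMono a) (hα : 0 < α) (hβα : β < α)
    (hlim : Tendsto (fun k : ℕ => (a k : ℝ) / (α * (k : ℝ) ^ h)) atTop (𝓝 1))
    (hρρ' : ρ < ρ') (hρ' : 0 < ρ') (hρ'β : α * ρ' ^ h < β) :
    ∀ᶠ n in atTop, ρ * n ≤ fillIndex a (ceilPow β h) n := by
  obtain ⟨N, hN⟩ :=
    eventually_atTop.mp (eventually_mul_lt_fillIndex_add_one ha hα hlim hρ' hρ'β)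
  have hρ'1 : ρ' < 1 := by
    refine lt_of_pow_lt_pow_left₀ h zero_le_one ?_
    rw [one_pow]
    nlinarith
  set g : ℕ → ℝ := fun n => fillIndex a (ceilPow β h) n + 1 - ρ' * n
  have hg : ∀ n ≥ N, 0 < g (n + 1) ∨ g n ≤ g (n + 1) := by
    intro n hn
    by_cases hcaught : ceilPow β h (n + 1) ≤ fill a (ceilPow β h) (n + 1)
    · left
      have := hN (n + 1) (by omega) hcaught
      simp only [g]
      linarith
    · right
      simp only [g, fillIndex_succ_of_fill_lt n (not_le.mp hcaught)]
      push_cast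
      linarith
  filter_upwards [eventually_ge_atTop N, (tendsto_natCast_atTop_atTop.const_mul_atTop
    (sub_pos.mpr hρρ')).eventually_ge_atTop (1 - min 0 (g N))] with n hn hlarge
  have := min_zero_le_of_pos_or_le hg hn
  simp only [g] at this
  linarith

lemma eventually_mul_pow_le_fill (ha : StrictMono a) (hα : 0 < α) (hβα : β < α)
    (hlim : Tendsto (fun k : ℕ => (a k : ℝ) / (α * (k : ℝ) ^ h)) atTop (𝓝 1))
    (hc₀ : 0 ≤ c) (hc : c < α) (hρ : 0 < ρ) (hρρ' : ρ < ρ') (hρ'β : α * ρ' ^ h < β) :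
    ∀ᶠ n in atTop, c * (ρ * n) ^ h ≤ fill a (ceilPow β h) n := by
  have hindex := eventually_mul_le_fillIndex ha hα hβα hlim hρρ' (hρ.trans hρρ') hρ'β
  have hindex_top : Tendsto (fillIndex a (ceilPow β h)) atTop atTop :=
    tendsto_natCast_atTop_iff.mp <| tendsto_atTop_mono' _ hindex <|
      tendsto_natCast_atTop_atTop.const_mul_atTop hρ
  filter_upwards [hindex, hindex_top.eventually (eventually_mul_pow_lt hα hlim hc)]
    with n hn happly
  calc c * (ρ * n) ^ h ≤ c * (fillIndex a (ceilPow β h) n : ℝ) ^ h := by gcongr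
    _ ≤ a (fillIndex a (ceilPow β h) n) := happly.le
    _ ≤ fill a (ceilPow β h) n := Nat.cast_le.mpr (fill_mem_Ico ha n).1

lemma eventually_lt_fill_div (ha : StrictMono a) (hh₀ : h ≠ 0) (hβ : 0 < β) (hβα : β < α)
    (hlim : Tendsto (fun k : ℕ => (a k : ℝ) / (α * (k : ℝ) ^ h)) atTop (𝓝 1))
    {l : ℝ} (hl : l < 1) :
    ∀ᶠ n : ℕ in atTop, l < (fill a (ceilPow β h) n : ℝ) / (β * (n : ℝ) ^ h) := by
  have hα : 0 < α := hβ.trans hβα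
  have hl' : ∀ᶠ t in 𝓝 (1 : ℝ), l < t ^ (2 * h + 1) :=
    ((continuous_pow (2 * h + 1)).tendsto 1).eventually (lt_mem_nhds (by rwa [one_pow]))
  obtain ⟨t, hlt, ht₀, ht₁⟩ :=
    ((hl'.filter_mono nhdsWithin_le_nhds).and (Ioo_mem_nhdsLT zero_lt_one)).exists
  set θ := (β / α) ^ (h⁻¹ : ℝ)
  have hθ : θ ^ h = β / α := Real.rpow_inv_natCast_pow (div_pos hβ hα).le hh₀
  have hθ₀ : 0 < θ := Real.rpow_pos_of_pos (div_pos hβ hα) _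
  -- index ratio `t² θ < t θ` and growth constant `t α` lose only a factor `t ^ (2h + 1)`
  have hbound := eventually_mul_pow_le_fill (c := t * α) (ρ := t ^ 2 * θ) (ρ' := t * θ)
    ha hα hβα hlim (by positivity) (mul_lt_of_lt_one_left hα ht₁) (by positivity)
    (by nlinarith [mul_pos ht₀ hθ₀]) (by
      rw [mul_pow, hθ]
      field_simp
      nlinarith [pow_lt_one₀ ht₀.le ht₁ hh₀])
  filter_upwards [hbound, eventually_ge_atTop 1] with n hn hn₁
  have hpos : 0 < β * (n : ℝ) ^ h := by positivity
  rw [lt_div_iff₀ hpos]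
  calc l * (β * (n : ℝ) ^ h) < t ^ (2 * h + 1) * (β * (n : ℝ) ^ h) := by gcongr
    _ = t * α * (t ^ 2 * θ * n) ^ h := by
      rw [mul_pow, mul_pow, hθ]
      field_simp
      ring
    _ ≤ fill a (ceilPow β h) n := hn

theorem tendsto_fill_div (ha : StrictMono a) (hh : 2 ≤ h) (hβ : 0 < β) (hβα : β < α)
    (hlim : Tendsto (fun k : ℕ => (a k : ℝ) / (α * (k : ℝ) ^ h)) atTop (𝓝 1)) :
    Tendsto (fun n : ℕ => (fill a (ceilPow β h) n : ℝ) / (β * (n : ℝ) ^ h)) atTop (𝓝 1) := by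
  have hh₀ : h ≠ 0 := by omega
  have hpow : Tendsto (fun n : ℕ => β * (n : ℝ) ^ h) atTop atTop :=
    ((tendsto_pow_atTop hh₀).comp tendsto_natCast_atTop_atTop).const_mul_atTop hβ
  refine tendsto_order.mpr ⟨fun l hl => eventually_lt_fill_div ha hh₀ hβ hβα hlim hl,
    fun u hu => ?_⟩
  filter_upwards [(tendsto_nat_ceil_div_atTop.comp hpow).eventually (gt_mem_nhds hu),
    eventually_fill_le (eventually_ceilPow_add_two_le hh hβ), hpow.eventually_gt_atTop 0]
    with n hceil hle hpos
  exact (div_le_div_of_nonneg_right (Nat.cast_le.mpr hle) hpos.le).trans_lt hceil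

end

/-- If `α` is an additive eigenvalue of order `h ≥ 2` and `0 < β < α`, then `β` is also
an additive eigenvalue of order `h`. -/
theorem stmt17 (h : ℕ) (hh : 2 ≤ h) (α β : ℝ)
    (hα : IsAdditiveEigenvalue h α) (hβ : 0 < β) (hβα : β < α) :
    IsAdditiveEigenvalue h β := by
  obtain ⟨a, ha, ⟨n₀, hbasis⟩, hlim⟩ := hα
  refine ⟨fill a (ceilPow β h), fill_strictMono ha, ⟨n₀, fun n hn => ?_⟩,
    tendsto_fill_div ha hh hβ hβα hlim⟩
  obtain ⟨c, hc, hsum⟩ := hbasis n hn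
  exact ⟨c, fun i => range_subset_range_fill ha (hc i), hsum⟩
end

section
/- If A = {a_k} is a strictly increasing sequence of positive integers with a_k ~ α k^h for some α > 0 and h ≥ 2, and 0 < β < α, then there exists a strictly increasing sequence of positive integers B = {b_n} with b_n ~ β n^h such that A is a subsequence of B. -/
/-!
Put `r = (α / β) ^ (1 / h) > 1`, so that `β (r k) ^ h = α k ^ h`. The term `a k` is placed at
position `N k ≈ r k` of `b`, and the positions strictly between `N k` and `N (k + 1)` are filled
with `a k + 1, a k + 2, …`; this stays below `a (k + 1)` as long as
`N (k + 1) - N k ≤ a (k + 1) - a k`. The positions are chosen greedily,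
`N (k + 1) = min (N k + (a (k + 1) - a k)) ⌈r (k + 1)⌉`. Then `N k ≤ ⌈r k⌉`, and
`N k ≥ ⌈r j⌉ + (a k - a j)` for some `j ≤ k`; since `a k - a ⌊θ k⌋` grows like `k ^ h ≫ k` for
every `θ < 1`, this forces `N k ~ r k`. Finally `a k ≤ b n ≤ a (k + 1)` for
`N k ≤ n < N (k + 1)`, and both bounds are `~ β n ^ h`.
-/

open Filter Topology Asymptotics

section FillGaps

variable {a N : ℕ → ℕ} {k n : ℕ}

-- For strictly monotone `N` we have `k ≤ N k`, so the search bound `n` loses nothing.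
def blockIndex (N : ℕ → ℕ) (n : ℕ) : ℕ := Nat.findGreatest (fun k => N k ≤ n) n

theorem apply_blockIndex_le (hN0 : N 0 = 0) (n : ℕ) : N (blockIndex N n) ≤ n :=
  Nat.findGreatest_spec (P := fun k => N k ≤ n) (Nat.zero_le n) (by simp [hN0])

theorem lt_apply_blockIndex_succ (hN : StrictMono N) (n : ℕ) : n < N (blockIndex N n + 1) := by
  by_contra! hle
  exact Nat.findGreatest_is_greatest (Nat.lt_succ_self _) (hN.le_apply.trans hle) hle

theorem blockIndex_eq_of_le_of_lt (hN : StrictMono N) (hN0 : N 0 = 0) (hk : N k ≤ n)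
    (hn : n < N (k + 1)) : blockIndex N n = k := by
  have h₁ := hN.lt_iff_lt.1 ((apply_blockIndex_le hN0 n).trans_lt hn)
  have h₂ := hN.lt_iff_lt.1 (hk.trans_lt (lt_apply_blockIndex_succ hN n))
  omega

theorem tendsto_blockIndex (hN : StrictMono N) :
    Tendsto (blockIndex N) atTop atTop := by
  refine tendsto_atTop_atTop.2 fun k => ⟨N k, fun n hn => ?_⟩
  by_contra! hlt
  exact (hn.trans_lt (lt_apply_blockIndex_succ hN n)).not_ge (hN.monotone hlt)

def fillGaps (a N : ℕ → ℕ) (n : ℕ) : ℕ := a (blockIndex N n) + (n - N (blockIndex N n))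

theorem fillGaps_eq_of_le_of_lt (hN : StrictMono N) (hN0 : N 0 = 0) (hk : N k ≤ n)
    (hn : n < N (k + 1)) : fillGaps a N n = a k + (n - N k) := by
  rw [fillGaps, blockIndex_eq_of_le_of_lt hN hN0 hk hn]

theorem fillGaps_apply_position (hN : StrictMono N) (hN0 : N 0 = 0) (k : ℕ) :
    fillGaps a N (N k) = a k := by
  simp [fillGaps_eq_of_le_of_lt hN hN0 le_rfl (hN (Nat.lt_add_one k))]

theorem strictMono_fillGaps (hN : StrictMono N) (hN0 : N 0 = 0)
    (hgap : ∀ k, N (k + 1) + a k ≤ N k + a (k + 1)) : StrictMono (fillGaps a N) := by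
  refine strictMono_nat_of_lt_succ fun n => ?_
  have hk := apply_blockIndex_le hN0 n
  have hn := lt_apply_blockIndex_succ hN n
  rw [fillGaps_eq_of_le_of_lt hN hN0 hk hn]
  rcases (show n + 1 ≤ _ from hn).lt_or_eq with hlt | heq
  · rw [fillGaps_eq_of_le_of_lt hN hN0 (hk.trans (Nat.le_add_right n 1)) hlt]
    omega
  · rw [heq, fillGaps_apply_position hN hN0]
    have := hgap (blockIndex N n)
    omega

end FillGaps

theorem isEquivalent_of_monotone_of_apply_eq {a b N : ℕ → ℕ} {g : ℕ → ℝ} (hb : Monotone b)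
    (hN : StrictMono N) (hN0 : N 0 = 0) (hbN : ∀ k, b (N k) = a k) (hg : Monotone g)
    (hg0 : ∀ᶠ n in atTop, 0 < g n)
    (hlow : (fun k => (a k : ℝ)) ~[atTop] fun k => g (N (k + 1)))
    (hup : (fun k => (a (k + 1) : ℝ)) ~[atTop] fun k => g (N k)) :
    (fun n => (b n : ℝ)) ~[atTop] g := by
  have hK := tendsto_blockIndex hN
  have hpos : ∀ᶠ k in atTop, 0 < g (N k) := hN.tendsto_atTop.eventually hg0
  have hpos' : ∀ᶠ k in atTop, 0 < g (N (k + 1)) := (tendsto_add_atTop_nat 1).eventually hpos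
  have hlow' := ((isEquivalent_iff_tendsto_one (hpos'.mono fun _ h => h.ne')).1 hlow).comp hK
  have hup' := ((isEquivalent_iff_tendsto_one (hpos.mono fun _ h => h.ne')).1 hup).comp hK
  refine isEquivalent_of_tendsto_one
    (tendsto_of_tendsto_of_tendsto_of_le_of_le' hlow' hup' ?_ ?_)
  all_goals
    filter_upwards [hK.eventually hpos] with n hn
    have hk := apply_blockIndex_le hN0 n
    have hn' := (lt_apply_blockIndex_succ hN n).le
    have hgk : g (N (blockIndex N n)) ≤ g n := hg hk
    have hgk' : g n ≤ g (N (blockIndex N n + 1)) := hg hn'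
    simp only [Function.comp_apply, Pi.div_apply]
  · have : (a (blockIndex N n) : ℝ) ≤ b n := by exact_mod_cast hbN _ ▸ hb hk
    exact div_le_div₀ (by positivity) this (hn.trans_le hgk) hgk'
  · have : (b n : ℝ) ≤ a (blockIndex N n + 1) := by exact_mod_cast hbN _ ▸ hb hn'
    exact div_le_div₀ (by positivity) this hn hgk

section Positions

variable {a c : ℕ → ℕ}

def cappedPositions (a c : ℕ → ℕ) : ℕ → ℕ
  | 0 => 0
  | k + 1 => min (cappedPositions a c k + (a (k + 1) - a k)) (c (k + 1))

theorem cappedPositions_le (k : ℕ) : cappedPositions a c k ≤ c k := by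
  cases k with
  | zero => exact Nat.zero_le _
  | succ k => exact min_le_right _ _

theorem cappedPositions_succ_add_le (ha : Monotone a) (k : ℕ) :
    cappedPositions a c (k + 1) + a k ≤ cappedPositions a c k + a (k + 1) := by
  have := min_le_left (cappedPositions a c k + (a (k + 1) - a k)) (c (k + 1))
  have := ha (Nat.le_add_right k 1)
  simp only [cappedPositions] at *
  omega

theorem strictMono_cappedPositions (ha : StrictMono a) (hc : StrictMono c) :
    StrictMono (cappedPositions a c) := by
  refine strictMono_nat_of_lt_succ fun k => lt_min ?_ ?_
  · have := ha (Nat.lt_add_one k)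
    omega
  · exact (cappedPositions_le k).trans_lt (hc (Nat.lt_add_one k))

theorem exists_le_add_le_cappedPositions (ha : Monotone a) (hc0 : c 0 = 0) (k : ℕ) :
    ∃ j ≤ k, c j + a k ≤ cappedPositions a c k + a j := by
  induction k with
  | zero => exact ⟨0, le_rfl, by simp [cappedPositions, hc0]⟩
  | succ k ih =>
    rcases le_total (c (k + 1)) (cappedPositions a c k + (a (k + 1) - a k)) with hcap | hstep
    · exact ⟨k + 1, le_rfl, by simp [cappedPositions, min_eq_right hcap]⟩
    · obtain ⟨j, hjk, hj⟩ := ih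
      refine ⟨j, hjk.trans (Nat.le_add_right k 1), ?_⟩
      have := ha (Nat.le_add_right k 1)
      simp only [cappedPositions, min_eq_left hstep]
      omega

end Positions

theorem strictMono_natCeil_mul {r : ℝ} (hr : 1 ≤ r) : StrictMono fun j : ℕ => ⌈r * j⌉₊ := by
  refine strictMono_nat_of_lt_succ fun j => Nat.lt_ceil.2 ?_
  calc (⌈r * j⌉₊ : ℝ) < r * j + 1 := Nat.ceil_lt_add_one (by positivity)
    _ ≤ r * (j + 1 : ℕ) := by push_cast; linarith

theorem eventually_le_cappedPositions {a c : ℕ → ℕ} {r θ : ℝ} (ha : Monotone a) (hr : 0 ≤ r)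
    (hc : ∀ j, r * j ≤ c j) (hc0 : c 0 = 0)
    (hgrowth : Tendsto (fun k : ℕ => ((a k : ℝ) - a ⌊θ * k⌋₊) / k) atTop atTop) :
    ∀ᶠ k : ℕ in atTop, θ * r * k ≤ cappedPositions a c k := by
  filter_upwards [hgrowth.eventually_ge_atTop (θ * r), eventually_gt_atTop 0] with k hlarge hk
  obtain ⟨j, hjk, hj⟩ := exists_le_add_le_cappedPositions (c := c) ha hc0 k
  have hj' : (c j : ℝ) + a k ≤ cappedPositions a c k + a j := by exact_mod_cast hj
  rcases le_or_gt j ⌊θ * k⌋₊ with hjθ | hθj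
  · have hlarge' : θ * r * k ≤ a k - a ⌊θ * k⌋₊ := (le_div_iff₀ (by positivity)).1 hlarge
    have : (a j : ℝ) ≤ a ⌊θ * k⌋₊ := by exact_mod_cast ha hjθ
    have : (0 : ℝ) ≤ c j := by positivity
    linarith
  · have : (a j : ℝ) ≤ a k := by exact_mod_cast ha hjk
    have : θ * r * k ≤ r * j := by nlinarith [Nat.lt_of_floor_lt hθj]
    linarith [hc j]

theorem isEquivalent_cappedPositions_natCeil {a : ℕ → ℕ} {r : ℝ} (ha : Monotone a) (hr : 1 ≤ r)
    (hgrowth : ∀ θ : ℝ, 0 < θ → θ < 1 →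
      Tendsto (fun k : ℕ => ((a k : ℝ) - a ⌊θ * k⌋₊) / k) atTop atTop) :
    (fun k => (cappedPositions a (fun j => ⌈r * j⌉₊) k : ℝ)) ~[atTop] fun k => r * k := by
  have hr0 : 0 < r := by linarith
  refine isEquivalent_of_tendsto_one (tendsto_order.2 ⟨fun t ht => ?_, fun t ht => ?_⟩)
  · obtain ⟨θ, htθ, hθ1⟩ := exists_between (max_lt ht one_pos)
    have hθ0 : 0 < θ := (le_max_right t 0).trans_lt htθ
    filter_upwards [eventually_le_cappedPositions ha hr0.le (fun j => Nat.le_ceil _) (by simp)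
      (hgrowth θ hθ0 hθ1), eventually_gt_atTop 0] with k hk hk0
    have htθ' : t < θ := (le_max_left t 0).trans_lt htθ
    have hrk : (0 : ℝ) < r * k := by positivity
    rw [Pi.div_apply, lt_div_iff₀ hrk]
    nlinarith
  · filter_upwards [tendsto_natCast_atTop_atTop.eventually_gt_atTop (1 / (r * (t - 1))),
      eventually_gt_atTop 0] with k hk hk0
    have hN : (cappedPositions a (fun j => ⌈r * j⌉₊) k : ℝ) < r * k + 1 :=
      (Nat.cast_le.2 (cappedPositions_le k)).trans_lt (Nat.ceil_lt_add_one (by positivity))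
    have : 1 < k * (r * (t - 1)) := (div_lt_iff₀ (by nlinarith)).1 hk
    rw [Pi.div_apply, div_lt_iff₀ (by positivity)]
    nlinarith

theorem tendsto_sub_apply_floor_div_atTop {a : ℕ → ℕ} {α θ : ℝ} {h : ℕ} (hh : 1 < h)
    (hα : 0 < α) (ha : Tendsto (fun k : ℕ => (a k : ℝ) / (α * (k : ℝ) ^ h)) atTop (𝓝 1))
    (hθ0 : 0 < θ) (hθ1 : θ < 1) :
    Tendsto (fun k : ℕ => ((a k : ℝ) - a ⌊θ * k⌋₊) / k) atTop atTop := by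
  have hfloor : Tendsto (fun k : ℕ => (⌊θ * k⌋₊ : ℝ) / k) atTop (𝓝 θ) :=
    (tendsto_nat_floor_mul_div_atTop hθ0.le).comp tendsto_natCast_atTop_atTop
  have hfloor_a :
      Tendsto (fun k : ℕ => (a ⌊θ * k⌋₊ : ℝ) / (α * (k : ℝ) ^ h)) atTop (𝓝 (θ ^ h)) := by
    have := (ha.comp (tendsto_nat_floor_mul_atTop θ hθ0)).mul (hfloor.pow h)
    rw [one_mul] at this
    refine this.congr' ?_
    filter_upwards [(tendsto_nat_floor_mul_atTop θ hθ0).eventually_gt_atTop 0,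
      eventually_gt_atTop 0] with k hm hk
    simp only [Function.comp_apply, div_pow]
    field_simp
  have hpow : Tendsto (fun k : ℕ => α * (k : ℝ) ^ (h - 1)) atTop atTop :=
    ((tendsto_pow_atTop (by omega)).comp tendsto_natCast_atTop_atTop).const_mul_atTop hα
  refine ((ha.sub hfloor_a).pos_mul_atTop (by simpa using pow_lt_one₀ hθ0.le hθ1 (by omega))
    hpow).congr' ?_
  filter_upwards [eventually_gt_atTop 0] with k hk
  obtain ⟨p, rfl⟩ : ∃ p, h = p + 1 := ⟨h - 1, by omega⟩
  simp only [Nat.add_sub_cancel, pow_succ]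
  field_simp

theorem Asymptotics.IsEquivalent.trans_const_mul_pow {ι : Type*} {l : Filter ι} {f g M : ι → ℝ}
    {α β r : ℝ} {h : ℕ} (hf : f ~[l] fun i => α * g i ^ h) (hM : M ~[l] fun i => r * g i)
    (hr : β * r ^ h = α) : f ~[l] fun i => β * M i ^ h := by
  have hβM : (fun i => β * M i ^ h) ~[l] fun i => β * (r * g i) ^ h :=
    (IsEquivalent.refl (u := fun _ => β)).mul (hM.pow h)
  simp_rw [mul_pow, ← mul_assoc, hr] at hβM
  exact hf.trans hβM.symm

theorem isEquivalent_mul_natCast_succ_pow (c : ℝ) (p : ℕ) :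
    (fun k : ℕ => c * ((k + 1 : ℕ) : ℝ) ^ p) ~[atTop] fun k => c * (k : ℝ) ^ p := by
  have hsucc : (fun k : ℕ => ((k + 1 : ℕ) : ℝ)) ~[atTop] fun k => (k : ℝ) := by
    refine (isEquivalent_of_tendsto_one ?_).symm
    refine (tendsto_natCast_div_add_atTop (1 : ℝ)).congr fun k => ?_
    simp
  exact (IsEquivalent.refl (u := fun _ => c)).mul (hsucc.pow p)

theorem exists_one_lt_mul_pow_eq {α β : ℝ} {h : ℕ} (hh : h ≠ 0) (hβ : 0 < β) (hβα : β < α) :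
    ∃ r : ℝ, 1 < r ∧ β * r ^ h = α := by
  refine ⟨(α / β) ^ (h⁻¹ : ℝ), Real.one_lt_rpow ((one_lt_div hβ).2 hβα)
    (inv_pos.2 (Nat.cast_pos.2 (Nat.pos_of_ne_zero hh))), ?_⟩
  rw [Real.rpow_inv_natCast_pow (div_pos (hβ.trans hβα) hβ).le hh]
  field_simp

theorem isEquivalent_fillGaps {a N : ℕ → ℕ} {α β r : ℝ} {h : ℕ} (hβ : 0 < β)
    (hN : StrictMono N) (hN0 : N 0 = 0) (hgap : ∀ k, N (k + 1) + a k ≤ N k + a (k + 1))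
    (hA : (fun k => (a k : ℝ)) ~[atTop] fun k => α * (k : ℝ) ^ h)
    (hNr : (fun k => (N k : ℝ)) ~[atTop] fun k => r * k) (hr : β * r ^ h = α) :
    (fun n => (fillGaps a N n : ℝ)) ~[atTop] fun n => β * (n : ℝ) ^ h := by
  have hAsucc : (fun k => (a (k + 1) : ℝ)) ~[atTop] fun k => α * (k : ℝ) ^ h :=
    (hA.comp_tendsto (tendsto_add_atTop_nat 1)).trans (isEquivalent_mul_natCast_succ_pow α h)
  have hNsucc : (fun k => (N (k + 1) : ℝ)) ~[atTop] fun k => r * k := by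
    have hshift := isEquivalent_mul_natCast_succ_pow r 1
    simp only [pow_one] at hshift
    exact (hNr.comp_tendsto (tendsto_add_atTop_nat 1)).trans hshift
  exact isEquivalent_of_monotone_of_apply_eq (strictMono_fillGaps hN hN0 hgap).monotone hN hN0
    (fillGaps_apply_position hN hN0) (fun m n hmn => by gcongr)
    (eventually_gt_atTop 0 |>.mono fun n hn => by positivity)
    (hA.trans_const_mul_pow hNsucc hr) (hAsucc.trans_const_mul_pow hNr hr)

/-- If `A = {a_k}` is a strictly increasing sequence of positive integers with
`a_k ~ α k^h` (`α > 0`, `h ≥ 2`) and `0 < β < α`, then `A` has a strictly increasing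
supersequence `B = {b_n}` of positive integers with `b_n ~ β n^h`. -/
theorem stmt19 (h : ℕ) (hh : 2 ≤ h) (α β : ℝ) (hα : 0 < α) (hβ : 0 < β) (hβα : β < α)
    (a : ℕ → ℕ) (ha : StrictMono a) (hapos : ∀ k, 0 < a k)
    (h1 : Filter.Tendsto (fun k : ℕ => (a k : ℝ) / (α * (k : ℝ) ^ h)) Filter.atTop
      (nhds 1)) :
    ∃ b : ℕ → ℕ, StrictMono b ∧ (∀ n, 0 < b n) ∧
      Filter.Tendsto (fun n : ℕ => (b n : ℝ) / (β * (n : ℝ) ^ h)) Filter.atTop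
        (nhds 1) ∧
      ∃ idx : ℕ → ℕ, StrictMono idx ∧ ∀ k, b (idx k) = a k := by
  obtain ⟨r, hr1, hrα⟩ := exists_one_lt_mul_pow_eq (h := h) (by omega) hβ hβα
  set N := cappedPositions a fun j => ⌈r * j⌉₊
  have hNmono : StrictMono N := strictMono_cappedPositions ha (strictMono_natCeil_mul hr1.le)
  have hgap := cappedPositions_succ_add_le (c := fun j => ⌈r * j⌉₊) ha.monotone
  have hN : (fun k => (N k : ℝ)) ~[atTop] fun k => r * k :=
    isEquivalent_cappedPositions_natCeil ha.monotone hr1.le fun θ hθ0 hθ1 =>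
      tendsto_sub_apply_floor_div_atTop (by omega) hα h1 hθ0 hθ1
  have hb := isEquivalent_fillGaps hβ hNmono rfl hgap (isEquivalent_of_tendsto_one h1) hN hrα
  refine ⟨fillGaps a N, strictMono_fillGaps hNmono rfl hgap,
    fun n => (hapos _).trans_le (Nat.le_add_right _ _), ?_, N, hNmono,
    fillGaps_apply_position hNmono rfl⟩
  exact (isEquivalent_iff_tendsto_one
    (eventually_gt_atTop 0 |>.mono fun n hn => by positivity)).1 hb
end
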